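/- arXiv:1702.07325 — 5 statements merged into one kernel-verified Lean document; each statement's English description precedes it below -/
import Mathlib

section
/- In any Sperner labeling of a triangulated triangle, the number of boundary edges whose endpoints are labeled 1 and 2 is odd. -/
open scoped Classical

/-- The `i`-th vertex `e_i` of the standard simplex in `ℝ^N`. -/
noncomputable def vtx (N : ℕ) (i : Fin N) : Fin N → ℝ := fun j => if j = i then 1 else 0

/-- The face of the standard simplex supported on the index set `S`. -/
def simFace (N : ℕ) (S : Finset (Fin N)) : Set (Fin N → ℝ) :=
  {x ∈ stdSimplex ℝ (Fin N) | ∀ i ∉ S, x i = 0}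

/-- A triangulation of the standard simplex `Δ = stdSimplex ℝ (Fin N)` (an `(N-1)`-simplex):
a finite family of `N`-element affinely independent vertex sets whose convex hulls cover `Δ`
and meet face-to-face. -/
structure Triangulation (N : ℕ) where
  facets : Finset (Finset (Fin N → ℝ))
  card_eq : ∀ σ ∈ facets, σ.card = N
  indep : ∀ σ ∈ facets, AffineIndependent ℝ (fun v : {x // x ∈ σ} => (v : Fin N → ℝ))
  covers : (⋃ σ ∈ facets, convexHull ℝ (σ : Set (Fin N → ℝ))) = stdSimplex ℝ (Fin N)
  faceToFace : ∀ σ ∈ facets, ∀ σ' ∈ facets,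
    convexHull ℝ (σ : Set (Fin N → ℝ)) ∩ convexHull ℝ (σ' : Set (Fin N → ℝ))
      = convexHull ℝ ((σ ∩ σ' : Finset (Fin N → ℝ)) : Set (Fin N → ℝ))

/-- The vertex set of a triangulation. -/
noncomputable def Triangulation.vertices {N : ℕ} (T : Triangulation N) :
    Finset (Fin N → ℝ) :=
  T.facets.biUnion id

/-- A Sperner labeling: each vertex `v` receives a label `ℓ v` lying in the support of `v`,
i.e. a vertex lying in the face `conv{e_i : i ∈ S}` is labeled by an element of `S`
(in particular `e_i` is labeled `i`). -/
def IsSperner {N : ℕ} (T : Triangulation N) (ℓ : (Fin N → ℝ) → Fin N) : Prop :=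
  ∀ v ∈ T.vertices, v (ℓ v) ≠ 0

namespace SpernerAux

open Finset

/-! ### The bottom edge of the triangle, parametrized -/

noncomputable def pt (t : ℝ) : Fin 3 → ℝ := ![1 - t, t, 0]

lemma pt_mem {t : ℝ} (h0 : 0 ≤ t) (h1 : t ≤ 1) : pt t ∈ stdSimplex ℝ (Fin 3) := by
  constructor
  · intro i
    fin_cases i <;> simp [pt] <;> linarith
  · simp [pt, Fin.sum_univ_three]

lemma pt_two (t : ℝ) : pt t 2 = 0 := rfl

lemma pt_one (t : ℝ) : pt t 1 = t := rfl

lemma seg_eq_pt {x : Fin 3 → ℝ} (hx : x ∈ stdSimplex ℝ (Fin 3)) (h2 : x 2 = 0) :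
    x = pt (x 1) := by
  have hs := hx.2
  rw [Fin.sum_univ_three] at hs
  funext j
  fin_cases j <;> simp [pt] <;> linarith

lemma seg_param_inj {x y : Fin 3 → ℝ} (hx : x ∈ stdSimplex ℝ (Fin 3)) (hx2 : x 2 = 0)
    (hy : y ∈ stdSimplex ℝ (Fin 3)) (hy2 : y 2 = 0) (h : x 1 = y 1) : x = y := by
  rw [seg_eq_pt hx hx2, seg_eq_pt hy hy2, h]

lemma coord_nonneg {x : Fin 3 → ℝ} (hx : x ∈ stdSimplex ℝ (Fin 3)) (i : Fin 3) : 0 ≤ x i :=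
  hx.1 i

lemma coord_le_one {x : Fin 3 → ℝ} (hx : x ∈ stdSimplex ℝ (Fin 3)) (i : Fin 3) : x i ≤ 1 := by
  have hs := hx.2
  rw [Fin.sum_univ_three] at hs
  have h0 := hx.1 0; have h1 := hx.1 1; have h2 := hx.1 2
  fin_cases i <;> simp <;> linarith

lemma collinear_seg : Collinear ℝ {x : Fin 3 → ℝ | x ∈ stdSimplex ℝ (Fin 3) ∧ x 2 = 0} := by
  have h0 : pt 0 ∈ {x : Fin 3 → ℝ | x ∈ stdSimplex ℝ (Fin 3) ∧ x 2 = 0} :=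
    ⟨pt_mem le_rfl zero_le_one, rfl⟩
  rw [collinear_iff_of_mem h0]
  refine ⟨pt 1 - pt 0, fun p hp => ⟨p 1, ?_⟩⟩
  rw [seg_eq_pt hp.1 hp.2]
  funext j
  fin_cases j <;> simp [pt] <;> ring

/-! ### Basic facts about facets -/

variable {T : Triangulation 3}

lemma hull_sub {σ : Finset (Fin 3 → ℝ)} (hσ : σ ∈ T.facets) :
    convexHull ℝ (σ : Set (Fin 3 → ℝ)) ⊆ stdSimplex ℝ (Fin 3) := by
  rw [← T.covers]
  intro x hx
  exact Set.mem_biUnion hσ hx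

lemma vmem {σ : Finset (Fin 3 → ℝ)} (hσ : σ ∈ T.facets) {v : Fin 3 → ℝ} (hv : v ∈ σ) :
    v ∈ stdSimplex ℝ (Fin 3) :=
  hull_sub hσ (subset_convexHull ℝ _ (by exact_mod_cast hv))

lemma indep_set {σ : Finset (Fin 3 → ℝ)} (hσ : σ ∈ T.facets) :
    AffineIndependent ℝ
      (fun x => x : {x : Fin 3 → ℝ // x ∈ (σ : Set (Fin 3 → ℝ))} → (Fin 3 → ℝ)) :=
  T.indep σ hσ

/-- If a point of the hull of a finset of simplex points has last coordinate zero,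
it is in the hull of the "bottom" vertices. -/
lemma hull_bottom {σ : Finset (Fin 3 → ℝ)} (hsub : ∀ y ∈ σ, y ∈ stdSimplex ℝ (Fin 3))
    {x : Fin 3 → ℝ} (hx : x ∈ convexHull ℝ (σ : Set (Fin 3 → ℝ))) (h2 : x 2 = 0) :
    x ∈ convexHull ℝ ((σ.filter (fun v => v 2 = 0) : Finset (Fin 3 → ℝ)) : Set (Fin 3 → ℝ)) := by
  rw [Finset.convexHull_eq] at hx ⊢
  obtain ⟨w, hw0, hw1, hwx⟩ := hx
  have hzero : ∀ y ∈ σ, y 2 ≠ 0 → w y = 0 := by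
    intro y hy hy2
    by_contra hwy
    have hypos : 0 < y 2 := lt_of_le_of_ne ((hsub y hy).1 2) (Ne.symm hy2)
    have hwypos : 0 < w y := lt_of_le_of_ne (hw0 y hy) (Ne.symm hwy)
    have hterm : ∀ z ∈ σ, 0 ≤ w z * z 2 := fun z hz =>
      mul_nonneg (hw0 z hz) ((hsub z hz).1 2)
    have hle : w y * y 2 ≤ ∑ z ∈ σ, w z * z 2 :=
      Finset.single_le_sum hterm hy
    have hx2 : x 2 = ∑ z ∈ σ, w z * z 2 := by
      rw [← hwx, Finset.centerMass_eq_of_sum_1 _ _ hw1]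
      simp [Finset.sum_apply]
    nlinarith
  refine ⟨w, fun y hy => hw0 y (Finset.mem_filter.mp hy).1, ?_, ?_⟩
  · rw [Finset.sum_filter_of_ne (fun y hy hwy => ?_)]
    · exact hw1
    · by_contra hy2
      exact hwy (hzero y hy hy2)
  · rw [Finset.centerMass_eq_of_sum_1, ← hwx, Finset.centerMass_eq_of_sum_1 _ _ hw1]
    · rw [Finset.sum_filter_of_ne]
      intro y hy hwy
      by_contra hy2
      rw [hzero y hy hy2] at hwy
      simp at hwy
    · rw [Finset.sum_filter_of_ne (fun y hy hwy => ?_)]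
      · exact hw1
      · by_contra hy2
        exact hwy (hzero y hy hy2)

/-- A facet has at most two vertices on the bottom edge. -/
lemma bot_card {σ : Finset (Fin 3 → ℝ)} (hσ : σ ∈ T.facets) :
    (σ.filter (fun v => v 2 = 0)).card ≤ 2 := by
  by_contra h
  push_neg at h
  obtain ⟨t, hts, htc⟩ := Finset.exists_subset_card_eq h
  obtain ⟨a, b, c, hab, hac, hbc, rfl⟩ := Finset.card_eq_three.mp htc
  have hmem : ∀ x ∈ ({a, b, c} : Finset (Fin 3 → ℝ)), x ∈ σ ∧ x 2 = 0 := by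
    intro x hx
    exact Finset.mem_filter.mp (hts hx)
  have ha := hmem a (by simp); have hb := hmem b (by simp); have hc := hmem c (by simp)
  have hcol : Collinear ℝ ({a, b, c} : Set (Fin 3 → ℝ)) := by
    apply collinear_seg.subset
    rintro x (rfl | rfl | rfl)
    · exact ⟨vmem hσ ha.1, ha.2⟩
    · exact ⟨vmem hσ hb.1, hb.2⟩
    · exact ⟨vmem hσ hc.1, hc.2⟩
  have hindep : AffineIndependent ℝ ![a, b, c] := by
    have hmono : AffineIndependent ℝ
        (fun x => x : Set.range ![a, b, c] → (Fin 3 → ℝ)) := by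
      apply (indep_set hσ).mono
      intro x hx
      simp only [Matrix.range_cons, Matrix.range_empty, Set.mem_union, Set.mem_singleton_iff,
        Set.union_empty, Set.mem_insert_iff] at hx
      rcases hx with rfl | rfl | rfl
      · exact_mod_cast ha.1
      · exact_mod_cast hb.1
      · exact_mod_cast hc.1
    have hinj : Function.Injective ![a, b, c] := by
      intro i j hij
      fin_cases i <;> fin_cases j <;> simp_all
    exact AffineIndependent.of_set_of_injective hmono hinj
  exact (affineIndependent_iff_not_collinear_set.mp hindep) hcol

/-- A vertex of a facet that lies in the hull of another facet is a vertex of it. -/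
lemma mem_of_mem_hull {σ σ' : Finset (Fin 3 → ℝ)} (hσ : σ ∈ T.facets) (hσ' : σ' ∈ T.facets)
    {v : Fin 3 → ℝ} (hv : v ∈ σ) (hvh : v ∈ convexHull ℝ (σ' : Set (Fin 3 → ℝ))) : v ∈ σ' := by
  have hmem : v ∈ convexHull ℝ ((σ ∩ σ' : Finset (Fin 3 → ℝ)) : Set (Fin 3 → ℝ)) := by
    rw [← T.faceToFace σ hσ σ' hσ']
    exact ⟨subset_convexHull ℝ _ (by exact_mod_cast hv), hvh⟩
  have hinter := (indep_set hσ).convexHull_inter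
    (t₁ := σ ∩ σ') (t₂ := {v}) Finset.inter_subset_left (by simpa using hv)
  have hv' : v ∈ convexHull ℝ (((σ ∩ σ') ∩ {v} : Finset (Fin 3 → ℝ)) : Set (Fin 3 → ℝ)) := by
    rw [Finset.coe_inter, hinter]
    exact ⟨hmem, by simp⟩
  have hne : ((σ ∩ σ') ∩ {v} : Finset (Fin 3 → ℝ)).Nonempty := by
    by_contra hne
    rw [Finset.not_nonempty_iff_eq_empty] at hne
    rw [hne] at hv'
    simp at hv'
  obtain ⟨u, hu⟩ := hne
  have := Finset.mem_inter.mp hu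
  have hu2 : u = v := by simpa using this.2
  subst hu2
  exact (Finset.mem_inter.mp this.1).2

/-! ### Pairs on the bottom edge -/

lemma pair_hull_mem_iff {a b x : Fin 3 → ℝ} :
    x ∈ convexHull ℝ (({a, b} : Finset (Fin 3 → ℝ)) : Set (Fin 3 → ℝ)) ↔
      ∃ t : ℝ, 0 ≤ t ∧ t ≤ 1 ∧ x = (1 - t) • a + t • b := by
  have hcoe : (({a, b} : Finset (Fin 3 → ℝ)) : Set (Fin 3 → ℝ)) = {a, b} := by simp
  rw [hcoe, convexHull_pair, segment_eq_image]
  constructor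
  · rintro ⟨t, ⟨ht0, ht1⟩, rfl⟩
    exact ⟨t, ht0, ht1, rfl⟩
  · rintro ⟨t, ht0, ht1, rfl⟩
    exact ⟨t, ⟨ht0, ht1⟩, rfl⟩

lemma pair_hull_param {a b x : Fin 3 → ℝ} (ha : a ∈ stdSimplex ℝ (Fin 3)) (ha2 : a 2 = 0)
    (hb : b ∈ stdSimplex ℝ (Fin 3)) (hb2 : b 2 = 0) (hab : a 1 ≤ b 1)
    (hx : x ∈ convexHull ℝ (({a, b} : Finset (Fin 3 → ℝ)) : Set (Fin 3 → ℝ))) :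
    x ∈ stdSimplex ℝ (Fin 3) ∧ x 2 = 0 ∧ a 1 ≤ x 1 ∧ x 1 ≤ b 1 := by
  obtain ⟨t, ht0, ht1, rfl⟩ := pair_hull_mem_iff.mp hx
  have hmem : (1 - t) • a + t • b ∈ stdSimplex ℝ (Fin 3) :=
    (convex_stdSimplex ℝ (Fin 3)) ha hb (by linarith) ht0 (by ring)
  have h1 : ((1 - t) • a + t • b) 1 = (1 - t) * a 1 + t * b 1 := by
    simp [Pi.add_apply, Pi.smul_apply, smul_eq_mul]
  have h2 : ((1 - t) • a + t • b) 2 = (1 - t) * a 2 + t * b 2 := by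
    simp [Pi.add_apply, Pi.smul_apply, smul_eq_mul]
  refine ⟨hmem, by rw [h2, ha2, hb2]; ring, ?_, ?_⟩ <;> rw [h1] <;> nlinarith

lemma pt_mem_pair {a b : Fin 3 → ℝ} (ha : a ∈ stdSimplex ℝ (Fin 3)) (ha2 : a 2 = 0)
    (hb : b ∈ stdSimplex ℝ (Fin 3)) (hb2 : b 2 = 0) (hab : a 1 < b 1) {m : ℝ}
    (h1 : a 1 ≤ m) (h2 : m ≤ b 1) :
    pt m ∈ convexHull ℝ (({a, b} : Finset (Fin 3 → ℝ)) : Set (Fin 3 → ℝ)) := by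
  rw [pair_hull_mem_iff]
  refine ⟨(m - a 1) / (b 1 - a 1), div_nonneg (by linarith) (by linarith), by
    rw [div_le_one (by linarith)]; linarith, ?_⟩
  have hne : b 1 - a 1 ≠ 0 := by linarith
  rw [seg_eq_pt ha ha2, seg_eq_pt hb hb2]
  funext j
  fin_cases j <;> simp [pt, Pi.add_apply, smul_eq_mul] <;> field_simp <;> ring

/-! ### Covering the bottom edge -/

/-- Every point of the bottom edge lies in the hull of the bottom vertices of some facet. -/
lemma cover_bot {x : Fin 3 → ℝ} (hx : x ∈ stdSimplex ℝ (Fin 3)) (h2 : x 2 = 0) :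
    ∃ σ ∈ T.facets,
      x ∈ convexHull ℝ ((σ.filter (fun v => v 2 = 0) : Finset (Fin 3 → ℝ)) : Set (Fin 3 → ℝ)) := by
  have hx' : x ∈ ⋃ σ ∈ T.facets, convexHull ℝ (σ : Set (Fin 3 → ℝ)) := by
    rw [T.covers]; exact hx
  obtain ⟨σ, hσ, hxσ⟩ := Set.mem_iUnion₂.mp hx'
  exact ⟨σ, hσ, hull_bottom (fun y hy => vmem hσ hy) hxσ h2⟩

/-- Structure of the bottom part of a facet: a single vertex or a pair. -/
lemma bot_cases {σ : Finset (Fin 3 → ℝ)} (hσ : σ ∈ T.facets) {x : Fin 3 → ℝ}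
    (hx : x ∈ convexHull ℝ ((σ.filter (fun v => v 2 = 0) : Finset (Fin 3 → ℝ)) : Set (Fin 3 → ℝ))) :
    (∃ a ∈ σ, a 2 = 0 ∧ x = a) ∨
    (∃ a b : Fin 3 → ℝ, a ∈ σ ∧ b ∈ σ ∧ a 2 = 0 ∧ b 2 = 0 ∧ a 1 < b 1 ∧
      ({a, b} : Finset (Fin 3 → ℝ)) = σ.filter (fun v => v 2 = 0) ∧
      x ∈ convexHull ℝ (({a, b} : Finset (Fin 3 → ℝ)) : Set (Fin 3 → ℝ))) := by
  set B := σ.filter (fun v => v 2 = 0) with hB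
  have hcard : B.card ≤ 2 := bot_card hσ
  interval_cases h : B.card
  · rw [Finset.card_eq_zero] at h
    rw [h] at hx
    simp at hx
  · rw [Finset.card_eq_one] at h
    obtain ⟨a, ha⟩ := h
    rw [ha] at hx
    simp only [Finset.coe_singleton, convexHull_singleton, Set.mem_singleton_iff] at hx
    have haB : a ∈ B := by rw [ha]; simp
    obtain ⟨haσ, ha2⟩ := Finset.mem_filter.mp haB
    exact Or.inl ⟨a, haσ, ha2, hx⟩
  · rw [Finset.card_eq_two] at h
    obtain ⟨a, b, hab, hB2⟩ := h
    have haB : a ∈ B := by rw [hB2]; simp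
    have hbB : b ∈ B := by rw [hB2]; simp
    obtain ⟨haσ, ha2⟩ := Finset.mem_filter.mp haB
    obtain ⟨hbσ, hb2⟩ := Finset.mem_filter.mp hbB
    have hne : a 1 ≠ b 1 := fun h => hab (seg_param_inj (vmem hσ haσ) ha2 (vmem hσ hbσ) hb2 h)
    rcases lt_or_gt_of_ne hne with hlt | hgt
    · exact Or.inr ⟨a, b, haσ, hbσ, ha2, hb2, hlt, hB2.symm, hB2 ▸ hx⟩
    · have hba : ({b, a} : Finset (Fin 3 → ℝ)) = {a, b} := by ext y; simp; tauto
      refine Or.inr ⟨b, a, hbσ, haσ, hb2, ha2, hgt, ?_, ?_⟩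
      · rw [hba, hB2]
      · rw [hba]; exact hB2 ▸ hx

/-! ### Bottom vertices and bottom edges -/

noncomputable def V (T : Triangulation 3) : Finset (Fin 3 → ℝ) :=
  T.vertices.filter (fun v => v 2 = 0)

noncomputable def E (T : Triangulation 3) : Finset (Finset (Fin 3 → ℝ)) :=
  (T.facets.biUnion fun σ => σ.powersetCard 2).filter (fun e => ∀ v ∈ e, v 2 = 0)

lemma mem_V_iff {v : Fin 3 → ℝ} : v ∈ V T ↔ (∃ σ ∈ T.facets, v ∈ σ) ∧ v 2 = 0 := by
  simp [V, Triangulation.vertices, Finset.mem_filter, Finset.mem_biUnion]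

lemma V_simplex {v : Fin 3 → ℝ} (hv : v ∈ V T) : v ∈ stdSimplex ℝ (Fin 3) := by
  obtain ⟨⟨σ, hσ, hvσ⟩, -⟩ := mem_V_iff.mp hv
  exact vmem hσ hvσ

lemma V_two {v : Fin 3 → ℝ} (hv : v ∈ V T) : v 2 = 0 := (mem_V_iff.mp hv).2

lemma mem_E_iff {e : Finset (Fin 3 → ℝ)} :
    e ∈ E T ↔ (∃ σ ∈ T.facets, e ⊆ σ ∧ e.card = 2) ∧ ∀ v ∈ e, v 2 = 0 := by
  simp [E, Finset.mem_filter, Finset.mem_biUnion, Finset.mem_powersetCard]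
  try tauto

lemma pair_mem_E {σ : Finset (Fin 3 → ℝ)} (hσ : σ ∈ T.facets) {v b : Fin 3 → ℝ}
    (hv : v ∈ σ) (hb : b ∈ σ) (hne : v ≠ b) (hv2 : v 2 = 0) (hb2 : b 2 = 0) :
    ({v, b} : Finset (Fin 3 → ℝ)) ∈ E T := by
  rw [mem_E_iff]
  refine ⟨⟨σ, hσ, ?_, ?_⟩, ?_⟩
  · intro x hx
    rcases Finset.mem_insert.mp hx with rfl | hx
    · exact hv
    · rw [Finset.mem_singleton.mp hx]; exact hb
  · rw [Finset.card_insert_of_notMem (by simpa using hne), Finset.card_singleton]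
  · intro x hx
    rcases Finset.mem_insert.mp hx with rfl | hx
    · exact hv2
    · rw [Finset.mem_singleton.mp hx]; exact hb2

lemma edge_sub_V {e : Finset (Fin 3 → ℝ)} (he : e ∈ E T) {v : Fin 3 → ℝ} (hve : v ∈ e) :
    v ∈ V T := by
  obtain ⟨⟨σ, hσ, hsub, -⟩, h2⟩ := mem_E_iff.mp he
  exact mem_V_iff.mpr ⟨⟨σ, hσ, hsub hve⟩, h2 v hve⟩

lemma edge_eq_pair {e : Finset (Fin 3 → ℝ)} (he : e ∈ E T) {v : Fin 3 → ℝ} (hve : v ∈ e) :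
    ∃ b, e = {v, b} ∧ b ≠ v := by
  obtain ⟨⟨σ, hσ, hsub, hc⟩, -⟩ := mem_E_iff.mp he
  obtain ⟨x, y, hxy, rfl⟩ := Finset.card_eq_two.mp hc
  rcases Finset.mem_insert.mp hve with rfl | hv
  · exact ⟨y, rfl, fun h => hxy h.symm⟩
  · rw [Finset.mem_singleton.mp hv]
    exact ⟨x, by ext z; simp; tauto, hxy⟩

/-! ### The corners are vertices -/

lemma corner_zero_mem : pt 0 ∈ V T := by
  obtain ⟨σ, hσ, hx⟩ := cover_bot (pt_mem le_rfl zero_le_one) (pt_two 0)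
  rcases bot_cases hσ hx with ⟨a, haσ, ha2, hpa⟩ | ⟨a, b, haσ, hbσ, ha2, hb2, hab, hBeq, hmem⟩
  · rw [hpa]; exact mem_V_iff.mpr ⟨⟨σ, hσ, haσ⟩, ha2⟩
  · have hp := pair_hull_param (vmem hσ haσ) ha2 (vmem hσ hbσ) hb2 (le_of_lt hab) hmem
    have ha1 : a 1 = 0 := le_antisymm (by simpa [pt_one] using hp.2.2.1) (coord_nonneg (vmem hσ haσ) 1)
    have : a = pt 0 := seg_param_inj (vmem hσ haσ) ha2 (pt_mem le_rfl zero_le_one) (pt_two 0)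
      (by rw [ha1, pt_one])
    rw [← this]; exact mem_V_iff.mpr ⟨⟨σ, hσ, haσ⟩, ha2⟩

lemma corner_one_mem : pt 1 ∈ V T := by
  obtain ⟨σ, hσ, hx⟩ := cover_bot (pt_mem zero_le_one le_rfl) (pt_two 1)
  rcases bot_cases hσ hx with ⟨a, haσ, ha2, hpa⟩ | ⟨a, b, haσ, hbσ, ha2, hb2, hab, hBeq, hmem⟩
  · rw [hpa]; exact mem_V_iff.mpr ⟨⟨σ, hσ, haσ⟩, ha2⟩
  · have hp := pair_hull_param (vmem hσ haσ) ha2 (vmem hσ hbσ) hb2 (le_of_lt hab) hmem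
    have hb1 : b 1 = 1 := le_antisymm (coord_le_one (vmem hσ hbσ) 1) (by simpa [pt_one] using hp.2.2.2)
    have : b = pt 1 := seg_param_inj (vmem hσ hbσ) hb2 (pt_mem zero_le_one le_rfl) (pt_two 1)
      (by rw [hb1, pt_one])
    rw [← this]; exact mem_V_iff.mpr ⟨⟨σ, hσ, hbσ⟩, hb2⟩

/-! ### Existence of adjacent edges -/

lemma exists_right {v : Fin 3 → ℝ} (hv : v ∈ V T) (h1 : v 1 < 1) :
    ∃ b ∈ V T, v 1 < b 1 ∧ ∃ σ ∈ T.facets, v ∈ σ ∧ b ∈ σ := by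
  obtain ⟨⟨σ0, hσ0, hvσ0⟩, hv2⟩ := mem_V_iff.mp hv
  set P := ((V T).filter (fun w => v 1 < w 1)).image (fun w => w 1) with hP
  have hPne : P.Nonempty := by
    refine ⟨(1 : ℝ), Finset.mem_image.mpr ⟨pt 1, Finset.mem_filter.mpr ⟨corner_one_mem, ?_⟩, pt_one 1⟩⟩
    rw [pt_one]; exact h1
  set ts := P.min' hPne with hts
  obtain ⟨w0, hw0, hw0eq⟩ := Finset.mem_image.mp (P.min'_mem hPne)
  obtain ⟨hw0V, hw0gt⟩ := Finset.mem_filter.mp hw0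
  have htsgt : v 1 < ts := by rw [hts, ← hw0eq]; exact hw0gt
  have htsle1 : ts ≤ 1 := by rw [hts, ← hw0eq]; exact coord_le_one (V_simplex hw0V) 1
  set m := (v 1 + ts) / 2 with hm
  have hm1 : v 1 < m := by rw [hm]; linarith
  have hm2 : m < ts := by rw [hm]; linarith
  have hm0 : 0 ≤ m := le_trans (coord_nonneg (V_simplex hv) 1) (le_of_lt hm1)
  have hmle1 : m ≤ 1 := le_trans (le_of_lt hm2) htsle1
  have hno : ∀ w ∈ V T, w 1 ≠ m := by
    intro w hw hwm
    rcases le_or_gt (w 1) (v 1) with h | h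
    · linarith
    · have : ts ≤ w 1 := P.min'_le _ (Finset.mem_image.mpr ⟨w, Finset.mem_filter.mpr ⟨hw, h⟩, rfl⟩)
      linarith
  obtain ⟨σ, hσ, hx⟩ := cover_bot (pt_mem hm0 hmle1) (pt_two m)
  rcases bot_cases hσ hx with ⟨a, haσ, ha2, hpa⟩ | ⟨a, b, haσ, hbσ, ha2, hb2, hab, hBeq, hmem⟩
  · exfalso
    have haV : a ∈ V T := mem_V_iff.mpr ⟨⟨σ, hσ, haσ⟩, ha2⟩
    exact hno a haV (by rw [← hpa, pt_one])
  · have hp := pair_hull_param (vmem hσ haσ) ha2 (vmem hσ hbσ) hb2 (le_of_lt hab) hmem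
    rw [pt_one] at hp
    have haV : a ∈ V T := mem_V_iff.mpr ⟨⟨σ, hσ, haσ⟩, ha2⟩
    have hbV : b ∈ V T := mem_V_iff.mpr ⟨⟨σ, hσ, hbσ⟩, hb2⟩
    have ham : a 1 < m := lt_of_le_of_ne hp.2.2.1 (hno a haV)
    have hbm : m < b 1 := lt_of_le_of_ne hp.2.2.2 (fun h => hno b hbV h.symm)
    have hale : a 1 ≤ v 1 := by
      by_contra hgt
      push_neg at hgt
      have : ts ≤ a 1 := P.min'_le _ (Finset.mem_image.mpr ⟨a, Finset.mem_filter.mpr ⟨haV, hgt⟩, rfl⟩)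
      linarith
    rcases eq_or_lt_of_le hale with heq | hlt
    · have : a = v := seg_param_inj (V_simplex haV) ha2 (V_simplex hv) hv2 heq
      subst this
      exact ⟨b, hbV, by linarith, σ, hσ, haσ, hbσ⟩
    · exfalso
      have hvpair : v ∈ convexHull ℝ (({a, b} : Finset (Fin 3 → ℝ)) : Set (Fin 3 → ℝ)) := by
        have := pt_mem_pair (V_simplex haV) ha2 (vmem hσ hbσ) hb2 (by linarith)
          (le_of_lt hlt) (by linarith : v 1 ≤ b 1)
        rwa [← seg_eq_pt (V_simplex hv) hv2] at this
      have hvσ : v ∈ σ := by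
        apply mem_of_mem_hull hσ0 hσ hvσ0
        refine convexHull_mono ?_ hvpair
        intro x hx
        simp only [Finset.coe_insert, Finset.coe_singleton, Set.mem_insert_iff,
          Set.mem_singleton_iff] at hx
        rcases hx with rfl | rfl
        · exact_mod_cast haσ
        · exact_mod_cast hbσ
      have hvB : v ∈ ({a, b} : Finset (Fin 3 → ℝ)) := by
        rw [hBeq]
        exact Finset.mem_filter.mpr ⟨hvσ, hv2⟩
      rcases Finset.mem_insert.mp hvB with rfl | hvB
      · linarith
      · rw [Finset.mem_singleton.mp hvB] at hm1
        linarith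

lemma exists_left {v : Fin 3 → ℝ} (hv : v ∈ V T) (h0 : 0 < v 1) :
    ∃ b ∈ V T, b 1 < v 1 ∧ ∃ σ ∈ T.facets, v ∈ σ ∧ b ∈ σ := by
  obtain ⟨⟨σ0, hσ0, hvσ0⟩, hv2⟩ := mem_V_iff.mp hv
  set P := ((V T).filter (fun w => w 1 < v 1)).image (fun w => w 1) with hP
  have hPne : P.Nonempty := by
    refine ⟨(0 : ℝ), Finset.mem_image.mpr ⟨pt 0, Finset.mem_filter.mpr ⟨corner_zero_mem, ?_⟩, pt_one 0⟩⟩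
    rw [pt_one]; exact h0
  set ts := P.max' hPne with hts
  obtain ⟨w0, hw0, hw0eq⟩ := Finset.mem_image.mp (P.max'_mem hPne)
  obtain ⟨hw0V, hw0lt⟩ := Finset.mem_filter.mp hw0
  have htslt : ts < v 1 := by rw [hts, ← hw0eq]; exact hw0lt
  have hts0 : 0 ≤ ts := by rw [hts, ← hw0eq]; exact coord_nonneg (V_simplex hw0V) 1
  set m := (v 1 + ts) / 2 with hm
  have hm1 : m < v 1 := by rw [hm]; linarith
  have hm2 : ts < m := by rw [hm]; linarith
  have hm0 : 0 ≤ m := le_trans hts0 (le_of_lt hm2)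
  have hmle1 : m ≤ 1 := le_trans (le_of_lt hm1) (coord_le_one (V_simplex hv) 1)
  have hno : ∀ w ∈ V T, w 1 ≠ m := by
    intro w hw hwm
    rcases le_or_gt (v 1) (w 1) with h | h
    · linarith
    · have : w 1 ≤ ts := P.le_max' _ (Finset.mem_image.mpr ⟨w, Finset.mem_filter.mpr ⟨hw, h⟩, rfl⟩)
      linarith
  obtain ⟨σ, hσ, hx⟩ := cover_bot (pt_mem hm0 hmle1) (pt_two m)
  rcases bot_cases hσ hx with ⟨a, haσ, ha2, hpa⟩ | ⟨a, b, haσ, hbσ, ha2, hb2, hab, hBeq, hmem⟩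
  · exfalso
    have haV : a ∈ V T := mem_V_iff.mpr ⟨⟨σ, hσ, haσ⟩, ha2⟩
    exact hno a haV (by rw [← hpa, pt_one])
  · have hp := pair_hull_param (vmem hσ haσ) ha2 (vmem hσ hbσ) hb2 (le_of_lt hab) hmem
    rw [pt_one] at hp
    have haV : a ∈ V T := mem_V_iff.mpr ⟨⟨σ, hσ, haσ⟩, ha2⟩
    have hbV : b ∈ V T := mem_V_iff.mpr ⟨⟨σ, hσ, hbσ⟩, hb2⟩
    have ham : a 1 < m := lt_of_le_of_ne hp.2.2.1 (hno a haV)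
    have hbm : m < b 1 := lt_of_le_of_ne hp.2.2.2 (fun h => hno b hbV h.symm)
    have hble : v 1 ≤ b 1 := by
      by_contra hgt
      push_neg at hgt
      have : b 1 ≤ ts := P.le_max' _ (Finset.mem_image.mpr ⟨b, Finset.mem_filter.mpr ⟨hbV, hgt⟩, rfl⟩)
      linarith
    rcases eq_or_lt_of_le hble with heq | hlt
    · have : b = v := seg_param_inj (V_simplex hbV) hb2 (V_simplex hv) hv2 heq.symm
      subst this
      exact ⟨a, haV, by linarith, σ, hσ, hbσ, haσ⟩
    · exfalso
      have hvpair : v ∈ convexHull ℝ (({a, b} : Finset (Fin 3 → ℝ)) : Set (Fin 3 → ℝ)) := by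
        have := pt_mem_pair (V_simplex haV) ha2 (vmem hσ hbσ) hb2 (by linarith)
          (by linarith : a 1 ≤ v 1) (le_of_lt hlt)
        rwa [← seg_eq_pt (V_simplex hv) hv2] at this
      have hvσ : v ∈ σ := by
        apply mem_of_mem_hull hσ0 hσ hvσ0
        refine convexHull_mono ?_ hvpair
        intro x hx
        simp only [Finset.coe_insert, Finset.coe_singleton, Set.mem_insert_iff,
          Set.mem_singleton_iff] at hx
        rcases hx with rfl | rfl
        · exact_mod_cast haσ
        · exact_mod_cast hbσ
      have hvB : v ∈ ({a, b} : Finset (Fin 3 → ℝ)) := by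
        rw [hBeq]
        exact Finset.mem_filter.mpr ⟨hvσ, hv2⟩
      rcases Finset.mem_insert.mp hvB with rfl | hvB
      · linarith
      · have hvb := Finset.mem_singleton.mp hvB
        rw [hvb] at hlt
        linarith

/-! ### Uniqueness of adjacent edges -/

lemma bot_eq_pair {σ : Finset (Fin 3 → ℝ)} (hσ : σ ∈ T.facets) {v b : Fin 3 → ℝ}
    (hv : v ∈ σ) (hb : b ∈ σ) (hne : v ≠ b) (hv2 : v 2 = 0) (hb2 : b 2 = 0) :
    σ.filter (fun w => w 2 = 0) = {v, b} := by
  refine (Finset.eq_of_subset_of_card_le ?_ ?_).symm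
  · intro x hx
    rcases Finset.mem_insert.mp hx with rfl | hx
    · exact Finset.mem_filter.mpr ⟨hv, hv2⟩
    · rw [Finset.mem_singleton.mp hx]; exact Finset.mem_filter.mpr ⟨hb, hb2⟩
  · calc (σ.filter (fun w => w 2 = 0)).card ≤ 2 := bot_card hσ
      _ = ({v, b} : Finset (Fin 3 → ℝ)).card := by
          rw [Finset.card_insert_of_notMem (by simpa using hne), Finset.card_singleton]

lemma right_unique_aux {v b b' : Fin 3 → ℝ} {σ σ' : Finset (Fin 3 → ℝ)}
    (hσ : σ ∈ T.facets) (hσ' : σ' ∈ T.facets)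
    (hv : v ∈ σ) (hv' : v ∈ σ') (hb : b ∈ σ) (hb' : b' ∈ σ')
    (hv2 : v 2 = 0) (hb2 : b 2 = 0) (hb2' : b' 2 = 0)
    (h1 : v 1 < b 1) (h1' : v 1 < b' 1) (hle : b 1 ≤ b' 1) : b = b' := by
  by_contra hne
  have hvs : v ∈ stdSimplex ℝ (Fin 3) := vmem hσ hv
  have hbs : b ∈ stdSimplex ℝ (Fin 3) := vmem hσ hb
  have hbs' : b' ∈ stdSimplex ℝ (Fin 3) := vmem hσ' hb'
  set m := (v 1 + b 1) / 2 with hm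
  have hm1 : v 1 < m := by rw [hm]; linarith
  have hm2 : m < b 1 := by rw [hm]; linarith
  have hy1 : pt m ∈ convexHull ℝ (({v, b} : Finset (Fin 3 → ℝ)) : Set (Fin 3 → ℝ)) :=
    pt_mem_pair hvs hv2 hbs hb2 h1 (le_of_lt hm1) (le_of_lt hm2)
  have hy2 : pt m ∈ convexHull ℝ (({v, b'} : Finset (Fin 3 → ℝ)) : Set (Fin 3 → ℝ)) :=
    pt_mem_pair hvs hv2 hbs' hb2' h1' (le_of_lt hm1) (by linarith)
  have hsubσ : (({v, b} : Finset (Fin 3 → ℝ)) : Set (Fin 3 → ℝ)) ⊆ (σ : Set (Fin 3 → ℝ)) := by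
    intro x hx
    simp only [Finset.coe_insert, Finset.coe_singleton, Set.mem_insert_iff,
      Set.mem_singleton_iff] at hx
    rcases hx with rfl | rfl
    · exact_mod_cast hv
    · exact_mod_cast hb
  have hsubσ' : (({v, b'} : Finset (Fin 3 → ℝ)) : Set (Fin 3 → ℝ)) ⊆ (σ' : Set (Fin 3 → ℝ)) := by
    intro x hx
    simp only [Finset.coe_insert, Finset.coe_singleton, Set.mem_insert_iff,
      Set.mem_singleton_iff] at hx
    rcases hx with rfl | rfl
    · exact_mod_cast hv'
    · exact_mod_cast hb'
  have hyi : pt m ∈ convexHull ℝ ((σ ∩ σ' : Finset (Fin 3 → ℝ)) : Set (Fin 3 → ℝ)) := by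
    rw [← T.faceToFace σ hσ σ' hσ']
    exact ⟨convexHull_mono hsubσ hy1, convexHull_mono hsubσ' hy2⟩
  have hyb : pt m ∈ convexHull ℝ
      (((σ ∩ σ').filter (fun w => w 2 = 0) : Finset (Fin 3 → ℝ)) : Set (Fin 3 → ℝ)) :=
    hull_bottom (fun y hy => vmem hσ (Finset.mem_inter.mp hy).1) hyi (pt_two m)
  have hsubv : ((σ ∩ σ').filter (fun w => w 2 = 0) : Finset (Fin 3 → ℝ)) ⊆ {v} := by
    intro u hu
    obtain ⟨hui, hu2⟩ := Finset.mem_filter.mp hu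
    obtain ⟨huσ, huσ'⟩ := Finset.mem_inter.mp hui
    have h1b : u ∈ ({v, b} : Finset (Fin 3 → ℝ)) := by
      rw [← bot_eq_pair hσ hv hb (fun h => by rw [h] at h1; linarith) hv2 hb2]
      exact Finset.mem_filter.mpr ⟨huσ, hu2⟩
    have h2b : u ∈ ({v, b'} : Finset (Fin 3 → ℝ)) := by
      rw [← bot_eq_pair hσ' hv' hb' (fun h => by rw [h] at h1'; linarith) hv2 hb2']
      exact Finset.mem_filter.mpr ⟨huσ', hu2⟩
    rcases Finset.mem_insert.mp h1b with rfl | hub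
    · exact Finset.mem_singleton_self u
    · rw [Finset.mem_singleton.mp hub] at h2b ⊢
      rcases Finset.mem_insert.mp h2b with h | h
      · exfalso; rw [h] at h1; linarith
      · exact absurd (Finset.mem_singleton.mp h) hne
  have : pt m ∈ convexHull ℝ (({v} : Finset (Fin 3 → ℝ)) : Set (Fin 3 → ℝ)) :=
    convexHull_mono (by exact_mod_cast hsubv) hyb
  simp only [Finset.coe_singleton, convexHull_singleton, Set.mem_singleton_iff] at this
  have : pt m 1 = v 1 := by rw [this]
  rw [pt_one] at this
  linarith

lemma right_unique {v b b' : Fin 3 → ℝ} {σ σ' : Finset (Fin 3 → ℝ)}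
    (hσ : σ ∈ T.facets) (hσ' : σ' ∈ T.facets)
    (hv : v ∈ σ) (hv' : v ∈ σ') (hb : b ∈ σ) (hb' : b' ∈ σ')
    (hv2 : v 2 = 0) (hb2 : b 2 = 0) (hb2' : b' 2 = 0)
    (h1 : v 1 < b 1) (h1' : v 1 < b' 1) : b = b' := by
  rcases le_total (b 1) (b' 1) with h | h
  · exact right_unique_aux hσ hσ' hv hv' hb hb' hv2 hb2 hb2' h1 h1' h
  · exact (right_unique_aux hσ' hσ hv' hv hb' hb hv2 hb2' hb2 h1' h1 h).symm

/-- Mirror image: uniqueness on the left, reduced to `right_unique` by symmetry of roles. -/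
lemma left_unique_aux {v b b' : Fin 3 → ℝ} {σ σ' : Finset (Fin 3 → ℝ)}
    (hσ : σ ∈ T.facets) (hσ' : σ' ∈ T.facets)
    (hv : v ∈ σ) (hv' : v ∈ σ') (hb : b ∈ σ) (hb' : b' ∈ σ')
    (hv2 : v 2 = 0) (hb2 : b 2 = 0) (hb2' : b' 2 = 0)
    (h1 : b 1 < v 1) (h1' : b' 1 < v 1) (h : b' 1 ≤ b 1) : b = b' := by
  · by_contra hne
    have hvs : v ∈ stdSimplex ℝ (Fin 3) := vmem hσ hv
    have hbs : b ∈ stdSimplex ℝ (Fin 3) := vmem hσ hb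
    have hbs' : b' ∈ stdSimplex ℝ (Fin 3) := vmem hσ' hb'
    set m := (v 1 + b 1) / 2 with hm
    have hm1 : m < v 1 := by rw [hm]; linarith
    have hm2 : b 1 < m := by rw [hm]; linarith
    have hy1 : pt m ∈ convexHull ℝ (({b, v} : Finset (Fin 3 → ℝ)) : Set (Fin 3 → ℝ)) :=
      pt_mem_pair hbs hb2 hvs hv2 h1 (le_of_lt hm2) (le_of_lt hm1)
    have hy2 : pt m ∈ convexHull ℝ (({b', v} : Finset (Fin 3 → ℝ)) : Set (Fin 3 → ℝ)) :=
      pt_mem_pair hbs' hb2' hvs hv2 h1' (by linarith) (le_of_lt hm1)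
    have hsubσ : (({b, v} : Finset (Fin 3 → ℝ)) : Set (Fin 3 → ℝ)) ⊆ (σ : Set (Fin 3 → ℝ)) := by
      intro x hx
      simp only [Finset.coe_insert, Finset.coe_singleton, Set.mem_insert_iff,
        Set.mem_singleton_iff] at hx
      rcases hx with rfl | rfl
      · exact_mod_cast hb
      · exact_mod_cast hv
    have hsubσ' : (({b', v} : Finset (Fin 3 → ℝ)) : Set (Fin 3 → ℝ)) ⊆ (σ' : Set (Fin 3 → ℝ)) := by
      intro x hx
      simp only [Finset.coe_insert, Finset.coe_singleton, Set.mem_insert_iff,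
        Set.mem_singleton_iff] at hx
      rcases hx with rfl | rfl
      · exact_mod_cast hb'
      · exact_mod_cast hv'
    have hyi : pt m ∈ convexHull ℝ ((σ ∩ σ' : Finset (Fin 3 → ℝ)) : Set (Fin 3 → ℝ)) := by
      rw [← T.faceToFace σ hσ σ' hσ']
      exact ⟨convexHull_mono hsubσ hy1, convexHull_mono hsubσ' hy2⟩
    have hyb : pt m ∈ convexHull ℝ
        (((σ ∩ σ').filter (fun w => w 2 = 0) : Finset (Fin 3 → ℝ)) : Set (Fin 3 → ℝ)) :=
      hull_bottom (fun y hy => vmem hσ (Finset.mem_inter.mp hy).1) hyi (pt_two m)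
    have hsubv : ((σ ∩ σ').filter (fun w => w 2 = 0) : Finset (Fin 3 → ℝ)) ⊆ {v} := by
      intro u hu
      obtain ⟨hui, hu2⟩ := Finset.mem_filter.mp hu
      obtain ⟨huσ, huσ'⟩ := Finset.mem_inter.mp hui
      have h1b : u ∈ ({v, b} : Finset (Fin 3 → ℝ)) := by
        rw [← bot_eq_pair hσ hv hb (fun hh => by rw [hh] at h1; linarith) hv2 hb2]
        exact Finset.mem_filter.mpr ⟨huσ, hu2⟩
      have h2b : u ∈ ({v, b'} : Finset (Fin 3 → ℝ)) := by
        rw [← bot_eq_pair hσ' hv' hb' (fun hh => by rw [hh] at h1'; linarith) hv2 hb2']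
        exact Finset.mem_filter.mpr ⟨huσ', hu2⟩
      rcases Finset.mem_insert.mp h1b with rfl | hub
      · exact Finset.mem_singleton_self u
      · rw [Finset.mem_singleton.mp hub] at h2b ⊢
        rcases Finset.mem_insert.mp h2b with hh | hh
        · exfalso; rw [hh] at h1; linarith
        · exact absurd (Finset.mem_singleton.mp hh) hne
    have hfin : pt m ∈ convexHull ℝ (({v} : Finset (Fin 3 → ℝ)) : Set (Fin 3 → ℝ)) :=
      convexHull_mono (by exact_mod_cast hsubv) hyb
    simp only [Finset.coe_singleton, convexHull_singleton, Set.mem_singleton_iff] at hfin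
    have : pt m 1 = v 1 := by rw [hfin]
    rw [pt_one] at this
    linarith

lemma left_unique {v b b' : Fin 3 → ℝ} {σ σ' : Finset (Fin 3 → ℝ)}
    (hσ : σ ∈ T.facets) (hσ' : σ' ∈ T.facets)
    (hv : v ∈ σ) (hv' : v ∈ σ') (hb : b ∈ σ) (hb' : b' ∈ σ')
    (hv2 : v 2 = 0) (hb2 : b 2 = 0) (hb2' : b' 2 = 0)
    (h1 : b 1 < v 1) (h1' : b' 1 < v 1) : b = b' := by
  rcases le_total (b' 1) (b 1) with h | h
  · exact left_unique_aux hσ hσ' hv hv' hb hb' hv2 hb2 hb2' h1 h1' h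
  · exact (left_unique_aux hσ' hσ hv' hv hb' hb hv2 hb2' hb2 h1' h1 h).symm

/-! ### Degrees of bottom vertices -/

lemma edge_through {v : Fin 3 → ℝ} (hv : v ∈ V T) {e : Finset (Fin 3 → ℝ)}
    (he : e ∈ E T) (hve : v ∈ e) :
    ∃ b σ, σ ∈ T.facets ∧ v ∈ σ ∧ b ∈ σ ∧ b 2 = 0 ∧ b 1 ≠ v 1 ∧ e = {v, b} := by
  obtain ⟨b, rfl, hbne⟩ := edge_eq_pair he hve
  obtain ⟨⟨σ, hσ, hsub, -⟩, h2⟩ := mem_E_iff.mp he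
  have hbσ : b ∈ σ := hsub (by simp)
  have hvσ : v ∈ σ := hsub (by simp)
  have hb2 : b 2 = 0 := h2 b (by simp)
  refine ⟨b, σ, hσ, hvσ, hbσ, hb2, ?_, rfl⟩
  intro h
  exact hbne (seg_param_inj (vmem hσ hbσ) hb2 (vmem hσ hvσ) (V_two hv) h)

lemma deg_interior {v : Fin 3 → ℝ} (hv : v ∈ V T) (h0 : 0 < v 1) (h1 : v 1 < 1) :
    ((E T).filter (fun e => v ∈ e)).card = 2 := by
  obtain ⟨br, hbrV, hbr1, σr, hσr, hvσr, hbrσr⟩ := exists_right hv h1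
  obtain ⟨bl, hblV, hbl1, σl, hσl, hvσl, hblσl⟩ := exists_left hv h0
  have hv2 := V_two hv
  have hbr2 := V_two hbrV
  have hbl2 := V_two hblV
  have hnebl : v ≠ bl := fun h => by rw [← h] at hbl1; linarith
  have hnebr : v ≠ br := fun h => by rw [← h] at hbr1; linarith
  have hset : (E T).filter (fun e => v ∈ e) = {({v, bl} : Finset (Fin 3 → ℝ)), {v, br}} := by
    ext e
    simp only [Finset.mem_filter, Finset.mem_insert, Finset.mem_singleton]
    constructor
    · rintro ⟨heE, hve⟩
      obtain ⟨b, σ, hσ, hvσ, hbσ, hb2, hbne1, rfl⟩ := edge_through hv heE hve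
      rcases lt_or_gt_of_ne hbne1 with hlt | hgt
      · have : b = bl := left_unique hσ hσl hvσ hvσl hbσ hblσl hv2 hb2 hbl2 hlt hbl1
        exact Or.inl (by rw [this])
      · have : b = br := right_unique hσ hσr hvσ hvσr hbσ hbrσr hv2 hb2 hbr2 hgt hbr1
        exact Or.inr (by rw [this])
    · rintro (rfl | rfl)
      · exact ⟨pair_mem_E hσl hvσl hblσl hnebl hv2 hbl2, by simp⟩
      · exact ⟨pair_mem_E hσr hvσr hbrσr hnebr hv2 hbr2, by simp⟩
  rw [hset, Finset.card_insert_of_notMem, Finset.card_singleton]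
  rw [Finset.mem_singleton]
  intro hcontra
  have : bl ∈ ({v, br} : Finset (Fin 3 → ℝ)) := by rw [← hcontra]; simp
  rcases Finset.mem_insert.mp this with h | h
  · rw [h] at hbl1; linarith
  · rw [Finset.mem_singleton.mp h] at hbl1; linarith

lemma deg_corner_zero : ((E T).filter (fun e => pt 0 ∈ e)).card = 1 := by
  have hv : pt 0 ∈ V T := corner_zero_mem
  have h1 : pt 0 1 < 1 := by rw [pt_one]; norm_num
  obtain ⟨br, hbrV, hbr1, σr, hσr, hvσr, hbrσr⟩ := exists_right hv h1
  have hv2 := V_two hv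
  have hbr2 := V_two hbrV
  have hnebr : pt 0 ≠ br := fun h => by rw [← h] at hbr1; linarith
  have hset : (E T).filter (fun e => pt 0 ∈ e) = {({pt 0, br} : Finset (Fin 3 → ℝ))} := by
    ext e
    simp only [Finset.mem_filter, Finset.mem_singleton]
    constructor
    · rintro ⟨heE, hve⟩
      obtain ⟨b, σ, hσ, hvσ, hbσ, hb2, hbne1, rfl⟩ := edge_through hv heE hve
      have hbpos : pt 0 1 < b 1 := by
        rw [pt_one]
        rw [pt_one] at hbne1
        exact lt_of_le_of_ne (coord_nonneg (vmem hσ hbσ) 1) (Ne.symm hbne1)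
      have : b = br := right_unique hσ hσr hvσ hvσr hbσ hbrσr hv2 hb2 hbr2 hbpos hbr1
      rw [this]
    · rintro rfl
      exact ⟨pair_mem_E hσr hvσr hbrσr hnebr hv2 hbr2, by simp⟩
  rw [hset, Finset.card_singleton]

lemma deg_corner_one : ((E T).filter (fun e => pt 1 ∈ e)).card = 1 := by
  have hv : pt 1 ∈ V T := corner_one_mem
  have h1 : 0 < pt 1 1 := by rw [pt_one]; norm_num
  obtain ⟨bl, hblV, hbl1, σl, hσl, hvσl, hblσl⟩ := exists_left hv h1
  have hv2 := V_two hv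
  have hbl2 := V_two hblV
  have hnebl : pt 1 ≠ bl := fun h => by rw [← h] at hbl1; linarith
  have hset : (E T).filter (fun e => pt 1 ∈ e) = {({pt 1, bl} : Finset (Fin 3 → ℝ))} := by
    ext e
    simp only [Finset.mem_filter, Finset.mem_singleton]
    constructor
    · rintro ⟨heE, hve⟩
      obtain ⟨b, σ, hσ, hvσ, hbσ, hb2, hbne1, rfl⟩ := edge_through hv heE hve
      have hblt : b 1 < pt 1 1 := by
        rw [pt_one]
        rw [pt_one] at hbne1
        exact lt_of_le_of_ne (coord_le_one (vmem hσ hbσ) 1) hbne1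
      have : b = bl := left_unique hσ hσl hvσ hvσl hbσ hblσl hv2 hb2 hbl2 hblt hbl1
      rw [this]
    · rintro rfl
      exact ⟨pair_mem_E hσl hvσl hblσl hnebl hv2 hbl2, by simp⟩
  rw [hset, Finset.card_singleton]

/-! ### Labels -/

variable {ℓ : (Fin 3 → ℝ) → Fin 3}

lemma V_sub_vertices {v : Fin 3 → ℝ} (hv : v ∈ V T) : v ∈ T.vertices :=
  (Finset.mem_filter.mp hv).1

lemma label_zero_or_one (hℓ : IsSperner T ℓ) {v : Fin 3 → ℝ} (hv : v ∈ V T) :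
    ℓ v = 0 ∨ ℓ v = 1 := by
  have h := hℓ v (V_sub_vertices hv)
  have h2 := V_two hv
  have h3 : ∀ i : Fin 3, i = 0 ∨ i = 1 ∨ i = 2 := by decide
  rcases h3 (ℓ v) with h' | h' | h'
  · exact Or.inl h'
  · exact Or.inr h'
  · rw [h'] at h; exact absurd h2 h

lemma label_corner_zero (hℓ : IsSperner T ℓ) : ℓ (pt 0) = 0 := by
  have h := hℓ (pt 0) (V_sub_vertices (corner_zero_mem (T := T)))
  have h3 : ∀ i : Fin 3, i = 0 ∨ i = 1 ∨ i = 2 := by decide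
  rcases h3 (ℓ (pt 0)) with h' | h' | h'
  · exact h'
  · rw [h'] at h; exact absurd (by norm_num [pt] : pt 0 1 = 0) h
  · rw [h'] at h; exact absurd (pt_two 0) h

lemma label_corner_one (hℓ : IsSperner T ℓ) : ℓ (pt 1) = 1 := by
  have h := hℓ (pt 1) (V_sub_vertices (corner_one_mem (T := T)))
  have h3 : ∀ i : Fin 3, i = 0 ∨ i = 1 ∨ i = 2 := by decide
  rcases h3 (ℓ (pt 1)) with h' | h' | h'
  · rw [h'] at h; exact absurd (by norm_num [pt] : pt 1 0 = 0) h
  · exact h'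
  · rw [h'] at h; exact absurd (pt_two 1) h

/-! ### Identifying the doors -/

lemma D_eq (hℓ : IsSperner T ℓ) :
    ((T.facets.biUnion fun σ => σ.powersetCard 2).filter
      (fun e => (∃ i : Fin 3, ∀ v ∈ e, v i = 0) ∧
        e.image ℓ = ({0, 1} : Finset (Fin 3))))
    = (E T).filter (fun e => e.image ℓ = ({0, 1} : Finset (Fin 3))) := by
  ext e
  simp only [E, Finset.mem_filter, Finset.mem_biUnion, Finset.mem_powersetCard]
  constructor
  · rintro ⟨⟨σ, hσ, hsub, hcard⟩, ⟨i, hi⟩, himg⟩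
    have heV : ∀ v ∈ e, v ∈ T.vertices := by
      intro v hv
      exact Finset.mem_biUnion.mpr ⟨σ, hσ, hsub hv⟩
    have h0 : ∃ a ∈ e, ℓ a = 0 := by
      have : (0 : Fin 3) ∈ e.image ℓ := by rw [himg]; simp
      obtain ⟨a, ha, hfa⟩ := Finset.mem_image.mp this
      exact ⟨a, ha, hfa⟩
    have h1 : ∃ a ∈ e, ℓ a = 1 := by
      have : (1 : Fin 3) ∈ e.image ℓ := by rw [himg]; simp
      obtain ⟨a, ha, hfa⟩ := Finset.mem_image.mp this
      exact ⟨a, ha, hfa⟩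
    obtain ⟨a, hae, hla⟩ := h0
    obtain ⟨b, hbe, hlb⟩ := h1
    have hi2 : i = 2 := by
      have hane := hℓ a (heV a hae)
      have hbne := hℓ b (heV b hbe)
      rw [hla] at hane
      rw [hlb] at hbne
      have h3 : ∀ j : Fin 3, j = 0 ∨ j = 1 ∨ j = 2 := by decide
      rcases h3 i with h' | h' | h'
      · rw [h'] at hi; exact absurd (hi a hae) hane
      · rw [h'] at hi; exact absurd (hi b hbe) hbne
      · exact h'
    rw [hi2] at hi
    exact ⟨⟨⟨σ, hσ, hsub, hcard⟩, hi⟩, himg⟩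
  · rintro ⟨⟨⟨σ, hσ, hsub, hcard⟩, h2⟩, himg⟩
    exact ⟨⟨σ, hσ, hsub, hcard⟩, ⟨2, h2⟩, himg⟩

/-! ### The parity count -/

lemma pair_label_count (hℓ : IsSperner T ℓ) {e : Finset (Fin 3 → ℝ)} (he : e ∈ E T) :
    ((e.filter (fun w => ℓ w = 0)).card : ZMod 2)
      = if e.image ℓ = ({0, 1} : Finset (Fin 3)) then 1 else 0 := by
  obtain ⟨⟨σ, hσ, hsub, hcard⟩, -⟩ := mem_E_iff.mp he
  obtain ⟨a, b, hab, rfl⟩ := Finset.card_eq_two.mp hcard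
  have haV : a ∈ V T := edge_sub_V he (by simp)
  have hbV : b ∈ V T := edge_sub_V he (by simp)
  have himg : ({a, b} : Finset (Fin 3 → ℝ)).image ℓ = {ℓ a, ℓ b} := by
    rw [Finset.image_insert, Finset.image_singleton]
  rw [himg]
  rcases label_zero_or_one hℓ haV with ha0 | ha1 <;>
    rcases label_zero_or_one hℓ hbV with hb0 | hb1
  · rw [Finset.filter_insert, Finset.filter_singleton, if_pos ha0, if_pos hb0, ha0, hb0]
    rw [if_neg (by decide)]
    rw [Finset.card_insert_of_notMem (by simpa using hab), Finset.card_singleton]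
    decide
  · rw [Finset.filter_insert, Finset.filter_singleton, if_pos ha0,
      if_neg (by rw [hb1]; decide), ha0, hb1]
    rw [if_pos rfl, Finset.card_insert_of_notMem (by simp), Finset.card_empty]
    decide
  · rw [Finset.filter_insert, Finset.filter_singleton, if_neg (by rw [ha1]; decide),
      if_pos hb0, ha1, hb0]
    rw [if_pos (by decide), Finset.card_singleton]
    exact Nat.cast_one
  · rw [Finset.filter_insert, Finset.filter_singleton, if_neg (by rw [ha1]; decide),
      if_neg (by rw [hb1]; decide), ha1, hb1]
    rw [if_neg (by decide), Finset.card_empty]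
    decide

lemma count_doors (hℓ : IsSperner T ℓ) :
    ((((E T).filter (fun e => e.image ℓ = ({0, 1} : Finset (Fin 3)))).card : ZMod 2)) = 1 := by
  set V0 := (V T).filter (fun w => ℓ w = 0) with hV0
  -- double counting
  have hstep1 : ∀ e ∈ E T, (e.filter (fun w => ℓ w = 0)) = V0.filter (fun w => w ∈ e) := by
    intro e he
    ext w
    simp only [hV0, Finset.mem_filter]
    constructor
    · rintro ⟨hwe, hw0⟩
      exact ⟨⟨edge_sub_V he hwe, hw0⟩, hwe⟩
    · rintro ⟨⟨-, hw0⟩, hwe⟩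
      exact ⟨hwe, hw0⟩
  have hstep2 : ∑ e ∈ E T, (e.filter (fun w => ℓ w = 0)).card
      = ∑ w ∈ V0, ((E T).filter (fun e => w ∈ e)).card := by
    calc ∑ e ∈ E T, (e.filter (fun w => ℓ w = 0)).card
        = ∑ e ∈ E T, (V0.filter (fun w => w ∈ e)).card := by
          exact Finset.sum_congr rfl (fun e he => by rw [hstep1 e he])
      _ = ∑ e ∈ E T, ∑ w ∈ V0, (if w ∈ e then 1 else 0) := by
          exact Finset.sum_congr rfl (fun e he => Finset.card_filter _ _)
      _ = ∑ w ∈ V0, ∑ e ∈ E T, (if w ∈ e then 1 else 0) := Finset.sum_comm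
      _ = ∑ w ∈ V0, ((E T).filter (fun e => w ∈ e)).card := by
          exact Finset.sum_congr rfl (fun w hw => (Finset.card_filter _ _).symm)
  -- the vertex-side sum is 1 mod 2
  have hpt0V0 : pt 0 ∈ V0 := Finset.mem_filter.mpr ⟨corner_zero_mem, label_corner_zero hℓ⟩
  have hvert : ∑ w ∈ V0, (((E T).filter (fun e => w ∈ e)).card : ZMod 2) = 1 := by
    rw [Finset.sum_eq_single_of_mem (pt 0) hpt0V0]
    · rw [deg_corner_zero]; exact Nat.cast_one
    · intro w hw hne
      obtain ⟨hwV, hw0⟩ := Finset.mem_filter.mp hw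
      have hws := V_simplex hwV
      have hw2 := V_two hwV
      have hne1 : w ≠ pt 1 := by
        intro h
        rw [h, label_corner_one hℓ] at hw0
        exact absurd hw0 (by decide)
      have hgt : 0 < w 1 := by
        rcases eq_or_lt_of_le (coord_nonneg hws 1) with h | h
        · exfalso
          exact hne (seg_param_inj hws hw2 (pt_mem le_rfl zero_le_one) (pt_two 0)
            (by rw [pt_one, ← h]))
        · exact h
      have hlt : w 1 < 1 := by
        rcases eq_or_lt_of_le (coord_le_one hws 1) with h | h
        · exact absurd (seg_param_inj hws hw2 (pt_mem zero_le_one le_rfl) (pt_two 1)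
            (by rw [pt_one, h])) hne1
        · exact h
      rw [deg_interior hwV hgt hlt]
      decide
  -- the edge-side sum equals the number of doors
  have hedge : ∑ e ∈ E T, ((e.filter (fun w => ℓ w = 0)).card : ZMod 2)
      = (((E T).filter (fun e => e.image ℓ = ({0, 1} : Finset (Fin 3)))).card : ZMod 2) := by
    rw [Finset.sum_congr rfl (fun e he => pair_label_count hℓ he)]
    rw [Finset.sum_boole]
  rw [← hedge]
  have : ((∑ e ∈ E T, (e.filter (fun w => ℓ w = 0)).card : ℕ) : ZMod 2)
      = ((∑ w ∈ V0, ((E T).filter (fun e => w ∈ e)).card : ℕ) : ZMod 2) := by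
    rw [hstep2]
  push_cast at this
  rw [this]
  exact hvert

end SpernerAux

/-- In any Sperner labeling of a triangulated triangle, the number of boundary
edges (edges of small triangles contained in the boundary of the triangle) whose two endpoints
are labeled `1` and `2` (here: `0` and `1` in `Fin 3`) is odd. -/
theorem sperner_boundary_doors_odd (T : Triangulation 3) (ℓ : (Fin 3 → ℝ) → Fin 3)
    (hℓ : IsSperner T ℓ) :
    Odd (((T.facets.biUnion fun σ => σ.powersetCard 2).filter
      (fun e => (∃ i : Fin 3, ∀ v ∈ e, v i = 0) ∧
        e.image ℓ = ({0, 1} : Finset (Fin 3)))).card) := by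
  rw [SpernerAux.D_eq hℓ]
  have hc := SpernerAux.count_doors (T := T) hℓ
  rcases Nat.even_or_odd (((SpernerAux.E T).filter
      (fun e => e.image ℓ = ({0, 1} : Finset (Fin 3)))).card) with he | ho
  · exfalso
    obtain ⟨k, hk⟩ := he
    rw [hk] at hc
    push_cast at hc
    rw [← two_mul] at hc
    have h2 : (2 : ZMod 2) = 0 := by decide
    rw [h2, zero_mul] at hc
    exact absurd hc (by decide)
  · exact ho
end

section
/- Sperner's lemma for the triangle: any Sperner labeling of a triangulated triangle contains at least one small triangle whose three vertices receive the three distinct labels 1, 2, 3. -/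
open scoped Classical

/-!
Call an edge a *door* if its endpoints are labelled `0` and `1`. A triangle has an odd number of
doors iff it is fully labelled, and an edge of the triangulation lies in exactly one triangle if it
is contained in a side of `Δ` and in exactly two otherwise. Counting pairs (triangle, door) twice,
the number of fully labelled triangles has the parity of the number of doors on `∂Δ`, and by the
Sperner condition these all lie on the side `x₂ = 0`.

The same count one dimension lower shows that this number is odd. Counting pairs (vertex
labelled `0`, edge on `x₂ = 0`) twice, it has the parity of the sum, over such vertices, of the
number of edges on `x₂ = 0` through them. For a vertex `v ≠ e₀` this number is even: each triangle
at `v` has two edges through `v`, and an edge through `v` lies in two triangles unless it is on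
`∂Δ`, which for such `v` means on `x₂ = 0`. Through `e₀` passes exactly one such edge.

The geometric input is the sign of `orient a b x = det (a, b, x)`: the third vertices of two
triangles sharing the edge `ab` lie strictly on opposite sides of the line `ab`.
-/

open Finset Filter Topology

section Combinatorics

variable {X : Type*} [DecidableEq X]

lemma Finset.exists_eq_insert_insert_of_card_eq_three {s : Finset X} (hs : #s = 3) {a b : X}
    (ha : a ∈ s) (hb : b ∈ s) (hab : a ≠ b) : ∃ c, s = {a, b, c} ∧ a ≠ c ∧ b ≠ c := by
  have hb' : b ∈ s.erase a := mem_erase.2 ⟨hab.symm, hb⟩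
  obtain ⟨c, hc⟩ := card_eq_one.1 (by rw [card_erase_of_mem hb', card_erase_of_mem ha, hs] :
    #((s.erase a).erase b) = 1)
  have hcmem : c ∈ (s.erase a).erase b := hc ▸ mem_singleton_self c
  refine ⟨c, ?_, (ne_of_mem_erase (mem_of_mem_erase hcmem)).symm, (ne_of_mem_erase hcmem).symm⟩
  rw [← hc, insert_erase hb', insert_erase ha]

lemma Finset.card_filter_powersetCard_two_image_eq_pair {Y : Type*} [DecidableEq Y]
    (s : Finset X) (f : X → Y) {i j : Y} (hij : i ≠ j) :
    #{e ∈ s.powersetCard 2 | e.image f = {i, j}} = #{x ∈ s | f x = i} * #{x ∈ s | f x = j} := by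
  rw [← card_product]
  symm
  refine card_bij (fun p _ => {p.1, p.2}) ?_ ?_ ?_
  · simp only [mem_product, mem_filter, mem_powersetCard]
    rintro ⟨x, y⟩ ⟨⟨hx, rfl⟩, hy, rfl⟩
    have hxy : x ≠ y := fun h => hij (h ▸ rfl)
    refine ⟨⟨?_, card_pair hxy⟩, by simp [image_insert]⟩
    simp [insert_subset_iff, hx, hy]
  · simp only [mem_product, mem_filter]
    rintro ⟨x, y⟩ ⟨⟨-, hx⟩, -, hy⟩ ⟨x', y'⟩ ⟨⟨-, hx'⟩, -, hy'⟩ h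
    have hx'' : x ∈ ({x', y'} : Finset X) := h ▸ mem_insert_self x {y}
    have hy'' : y ∈ ({x', y'} : Finset X) := h ▸ by simp
    simp only [mem_insert, mem_singleton] at hx'' hy''
    grind
  · simp only [mem_filter, mem_powersetCard, mem_product]
    rintro e ⟨⟨hes, he2⟩, hef⟩
    obtain ⟨x, y, hxy, rfl⟩ := card_eq_two.1 he2
    have hx := hes (mem_insert_self x {y})
    have hy := hes (by simp : y ∈ ({x, y} : Finset X))
    rw [image_insert, image_singleton, ← coe_inj, coe_pair, coe_pair, Set.pair_eq_pair_iff] at hef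
    rcases hef with ⟨h1, h2⟩ | ⟨h1, h2⟩
    · exact ⟨(x, y), ⟨⟨hx, h1⟩, hy, h2⟩, rfl⟩
    · exact ⟨(y, x), ⟨⟨hy, h2⟩, hx, h1⟩, pair_comm y x⟩

lemma Finset.card_filter_powersetCard_two_image_mod_two {s : Finset X} (hs : #s = 3)
    (f : X → Fin 3) :
    #{e ∈ s.powersetCard 2 | e.image f = {0, 1}} % 2 = if s.image f = univ then 1 else 0 := by
  rw [card_filter_powersetCard_two_image_eq_pair s f (by decide)]
  have hsum := card_eq_sum_card_fiberwise (f := f) (s := s) (t := univ) (by simp)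
  rw [Fin.sum_univ_three, hs] at hsum
  have himage : s.image f = univ ↔
      0 < #{x ∈ s | f x = 0} ∧ 0 < #{x ∈ s | f x = 1} ∧ 0 < #{x ∈ s | f x = 2} := by
    simp only [eq_univ_iff_forall, mem_image, card_pos, filter_nonempty_iff]
    exact ⟨fun h => ⟨h 0, h 1, h 2⟩, fun h i => by fin_cases i <;> simp_all⟩
  split_ifs with h <;> rw [himage] at h <;>
    generalize #{x ∈ s | f x = 0} = n₀, #{x ∈ s | f x = 1} = n₁, #{x ∈ s | f x = 2} = n₂ at *
  · obtain ⟨rfl, rfl⟩ : n₀ = 1 ∧ n₁ = 1 := by omega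
    rfl
  · rw [Nat.mul_mod]
    rcases (by omega : n₀ % 2 = 0 ∨ n₁ % 2 = 0) with h' | h' <;> simp [h']

lemma Finset.card_filter_eq_zero_mod_two_of_card_eq_two {s : Finset X} (hs : #s = 2)
    (f : X → Fin 3) (hf : ∀ x ∈ s, f x ≠ 2) :
    #{x ∈ s | f x = 0} % 2 = if s.image f = {0, 1} then 1 else 0 := by
  obtain ⟨x, y, hxy, rfl⟩ := card_eq_two.1 hs
  have hx : f x = 0 ∨ f x = 1 := by have := hf x (by simp); omega
  have hy : f y = 0 ∨ f y = 1 := by have := hf y (by simp); omega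
  rcases hx with hx | hx <;> rcases hy with hy | hy <;>
    simp [filter_insert, filter_singleton, image_insert, hx, hy, hxy] <;> decide

end Combinatorics

section ConvexHull

variable {E : Type*} [AddCommGroup E] [Module ℝ E]

lemma LinearMap.map_eq_zero_of_mem_convexHull (l : E →ₗ[ℝ] ℝ) {s : Set E}
    (hs : ∀ y ∈ s, l y = 0) {x : E} (hx : x ∈ convexHull ℝ s) : l x = 0 :=
  convexHull_min (t := (LinearMap.ker l : Set E)) hs (LinearMap.ker l).convex hx

lemma LinearMap.map_nonneg_of_mem_convexHull (l : E →ₗ[ℝ] ℝ) {s : Set E}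
    (hs : ∀ y ∈ s, 0 ≤ l y) {x : E} (hx : x ∈ convexHull ℝ s) : 0 ≤ l x :=
  convexHull_min (t := {y | 0 ≤ l y}) hs (convex_halfSpace_ge l.isLinear 0) hx

lemma Finset.mem_convexHull_filter_of_map_eq_zero {s : Finset E} (l : E →ₗ[ℝ] ℝ)
    (hl : ∀ y ∈ s, 0 ≤ l y) {x : E} (hx : x ∈ convexHull ℝ (s : Set E)) (hlx : l x = 0) :
    x ∈ convexHull ℝ (s.filter (l · = 0) : Set E) := by
  obtain ⟨w, hw0, hw1, rfl⟩ := Finset.mem_convexHull'.1 hx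
  simp only [map_sum, map_smul, smul_eq_mul] at hlx
  have hw : ∀ y ∈ s, w y ≠ 0 → l y = 0 := fun y hy hwy =>
    (mul_eq_zero.1 ((sum_eq_zero_iff_of_nonneg fun y hy =>
      mul_nonneg (hw0 y hy) (hl y hy)).1 hlx y hy)).resolve_left hwy
  refine Finset.mem_convexHull'.2 ⟨w, fun y hy => hw0 y (mem_filter.1 hy).1, ?_, ?_⟩
  · rwa [sum_filter_of_ne hw]
  · exact sum_filter_of_ne fun y hy hy0 => hw y hy fun h => hy0 (by rw [h, zero_smul])

lemma smul_add_smul_add_smul_mem_convexHull {a b c : E} {p q r : ℝ} (hp : 0 ≤ p) (hq : 0 ≤ q)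
    (hr : 0 ≤ r) (h : p + q + r = 1) : p • a + q • b + r • c ∈ convexHull ℝ {a, b, c} := by
  have := (convex_convexHull ℝ ({a, b, c} : Set E)).sum_mem (t := univ) (w := ![p, q, r])
    (z := ![a, b, c]) (by simp [Fin.forall_fin_succ, hp, hq, hr])
    (by simp [Fin.sum_univ_three, h])
    (by simp [Fin.forall_fin_succ, subset_convexHull ℝ _ (by simp : a ∈ ({a, b, c} : Set E)),
      subset_convexHull ℝ _ (by simp : b ∈ ({a, b, c} : Set E)),
      subset_convexHull ℝ _ (by simp : c ∈ ({a, b, c} : Set E))])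
  simpa [Fin.sum_univ_three] using this

lemma exists_mem_convexHull_inter_of_same_side {a b c c' : E} {α β γ : ℝ}
    (hc' : c' = α • a + β • b + γ • c) (hsum : α + β + γ = 1) (hγ : 0 < γ) :
    ∃ p q μ : ℝ, 0 < μ ∧
      p • a + q • b + μ • c' ∈ convexHull ℝ {a, b, c} ∩ convexHull ℝ {a, b, c'} := by
  set K := 1 + |α| + |β|
  have hK : 0 < K := by positivity
  refine ⟨|α| / K, |β| / K, 1 / K, by positivity, ?_,
    smul_add_smul_add_smul_mem_convexHull (by positivity) (by positivity) (by positivity)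
      (by field_simp; ring)⟩
  rw [show (|α| / K) • a + (|β| / K) • b + (1 / K) • c' =
      ((|α| + α) / K) • a + ((|β| + β) / K) • b + (γ / K) • c by rw [hc']; module]
  exact smul_add_smul_add_smul_mem_convexHull
    (div_nonneg (by linarith [neg_abs_le α]) hK.le) (div_nonneg (by linarith [neg_abs_le β]) hK.le)
    (by positivity) (by field_simp; linarith)

end ConvexHull

section StdSimplex

lemma Matrix.det_ne_zero_of_affineIndependent {n : ℕ} {p : Fin n → Fin n → ℝ}
    (hp : AffineIndependent ℝ p) (hsum : ∀ i, ∑ j, p i j = 1) : (Matrix.of p).det ≠ 0 := by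
  intro h0
  obtain ⟨w, hw, hwp⟩ := Matrix.exists_vecMul_eq_zero_iff.2 h0
  rw [Matrix.vecMul_eq_sum] at hwp
  have hw0 : ∑ i, w i = 0 := by
    have := congrArg (fun y => ∑ j, y j) hwp
    simpa [Finset.sum_apply, ← Finset.mul_sum, hsum, Finset.sum_comm (γ := Fin n)] using this
  exact hw (funext fun i => affineIndependent_iff.1 hp univ w hw0 hwp i (mem_univ i))

variable {N : ℕ}

lemma vtx_mem_stdSimplex (i : Fin N) : vtx N i ∈ stdSimplex ℝ (Fin N) := by
  convert ite_eq_mem_stdSimplex ℝ i using 2 with j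
  simp [vtx, eq_comm]

lemma eq_vtx_of_mem_stdSimplex {y : Fin N → ℝ} (hy : y ∈ stdSimplex ℝ (Fin N)) {i : Fin N}
    (h : ∀ j ≠ i, y j = 0) : y = vtx N i := by
  funext j
  by_cases hj : j = i
  · subst hj
    simpa [vtx, sum_eq_single j fun k _ hk => h k hk] using hy.2
  · simp [vtx, hj, h j hj]

lemma eventually_add_smul_mem_stdSimplex {x d : Fin N → ℝ} (hx : ∀ i, 0 < x i)
    (hx1 : ∑ i, x i = 1) (hd : ∑ i, d i = 0) :
    ∀ᶠ t in 𝓝 (0 : ℝ), x + t • d ∈ stdSimplex ℝ (Fin N) := by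
  have hpos : ∀ i, ∀ᶠ t in 𝓝 (0 : ℝ), 0 < x i + t * d i := fun i => by
    have : Tendsto (fun t : ℝ => x i + t * d i) (𝓝 0) (𝓝 (x i)) := by
      exact (continuous_const.add (continuous_id.mul continuous_const)).tendsto' 0 _ (by simp)
    exact this.eventually (lt_mem_nhds (hx i))
  filter_upwards [eventually_all.2 hpos] with t ht
  exact ⟨fun i => (ht i).le, by simp [sum_add_distrib, ← mul_sum, hx1, hd]⟩

end StdSimplex

section Orientation

/-- For `a, b, x` in the plane `∑ i, x i = 1`, `orient a b x` is a fixed multiple of the signed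
area of the triangle `a b x`; its sign tells on which side of the line `ab` the point `x` lies. -/
noncomputable def orient (a b : Fin 3 → ℝ) : (Fin 3 → ℝ) →ₗ[ℝ] ℝ where
  toFun x := (Matrix.of ![a, b, x]).det
  map_add' x y := by
    simp only [Matrix.det_fin_three, Matrix.of_apply, Matrix.cons_val', Matrix.cons_val_fin_one,
      Matrix.cons_val_zero, Matrix.cons_val_one, Matrix.cons_val, Pi.add_apply]
    ring
  map_smul' r x := by
    simp only [Matrix.det_fin_three, Matrix.of_apply, Matrix.cons_val', Matrix.cons_val_fin_one,
      Matrix.cons_val_zero, Matrix.cons_val_one, Matrix.cons_val, Pi.smul_apply, smul_eq_mul,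
      RingHom.id_apply]
    ring

lemma orient_apply (a b x : Fin 3 → ℝ) : orient a b x =
    a 0 * b 1 * x 2 - a 0 * b 2 * x 1 - a 1 * b 0 * x 2 + a 1 * b 2 * x 0
      + a 2 * b 0 * x 1 - a 2 * b 1 * x 0 := by
  simp [orient, Matrix.det_fin_three]

@[simp] lemma orient_self_left (a b : Fin 3 → ℝ) : orient a b a = 0 := by
  rw [orient_apply]; ring

@[simp] lemma orient_self_right (a b : Fin 3 → ℝ) : orient a b b = 0 := by
  rw [orient_apply]; ring

lemma orient_smul_eq (a b c x : Fin 3 → ℝ) :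
    orient a b c • x = orient b c x • a + orient c a x • b + orient a b x • c := by
  ext i; fin_cases i <;> simp [orient_apply] <;> ring

lemma eq_orient_div_smul_add {a b c : Fin 3 → ℝ} (hd : orient a b c ≠ 0) (x : Fin 3 → ℝ) :
    x = (orient b c x / orient a b c) • a + (orient c a x / orient a b c) • b +
      (orient a b x / orient a b c) • c := by
  conv_lhs => rw [← inv_smul_smul₀ hd x, orient_smul_eq]
  simp only [div_eq_inv_mul, smul_add, smul_smul]

lemma orient_add_orient_add_orient {a b c x : Fin 3 → ℝ} (ha : ∑ i, a i = 1) (hb : ∑ i, b i = 1)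
    (hc : ∑ i, c i = 1) (hx : ∑ i, x i = 1) :
    orient b c x + orient c a x + orient a b x = orient a b c := by
  have h := congrArg (fun y : Fin 3 → ℝ => ∑ i, y i) (orient_smul_eq a b c x)
  simp only [Pi.add_apply, Pi.smul_apply, smul_eq_mul, sum_add_distrib, ← mul_sum, ha, hb, hc,
    hx] at h
  linarith

lemma orient_eq_zero_of_apply_eq_zero {a b c : Fin 3 → ℝ} (i : Fin 3)
    (ha : a i = 0) (hb : b i = 0) (hc : c i = 0) : orient a b c = 0 :=
  Matrix.det_eq_zero_of_column_eq_zero i fun j => by fin_cases j <;> simpa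

lemma orient_mul_orient_nonneg_of_mem_convexHull {a b c x : Fin 3 → ℝ}
    (hx : x ∈ convexHull ℝ {a, b, c}) : 0 ≤ orient a b c * orient a b x :=
  (orient a b c • orient a b).map_nonneg_of_mem_convexHull
    (fun y hy => by obtain rfl | rfl | rfl := hy <;> simp [mul_self_nonneg]) hx

lemma mem_of_orient_ne_zero {K : Finset (Fin 3 → ℝ)} {a b c x : Fin 3 → ℝ} (hK : K ⊆ {a, b, c})
    (hx : x ∈ convexHull ℝ (K : Set (Fin 3 → ℝ))) (h : orient b c x ≠ 0) : a ∈ K := by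
  by_contra haK
  refine h ((orient b c).map_eq_zero_of_mem_convexHull (fun y hy => ?_) hx)
  obtain rfl | rfl | rfl := by simpa using hK hy
  exacts [absurd hy haK, orient_self_left _ _, orient_self_right _ _]

end Orientation

namespace Triangulation

section General

variable {N : ℕ} (T : Triangulation N)

noncomputable def edges : Finset (Finset (Fin N → ℝ)) :=
  T.facets.biUnion (powersetCard 2)

noncomputable def edgeDegree (e : Finset (Fin N → ℝ)) : ℕ :=
  #{σ ∈ T.facets | e ⊆ σ}

variable {T}

lemma mem_edges {e : Finset (Fin N → ℝ)} :
    e ∈ T.edges ↔ ∃ σ ∈ T.facets, e ⊆ σ ∧ #e = 2 := by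
  simp [edges]

lemma mem_stdSimplex_of_mem_facet {σ : Finset (Fin N → ℝ)} (hσ : σ ∈ T.facets)
    {v : Fin N → ℝ} (hv : v ∈ σ) : v ∈ stdSimplex ℝ (Fin N) :=
  T.covers ▸ Set.mem_biUnion hσ (subset_convexHull ℝ (σ : Set (Fin N → ℝ)) hv)

lemma mem_facet_of_mem_convexHull {v : Fin N → ℝ} (hv : v ∈ T.vertices)
    {σ : Finset (Fin N → ℝ)} (hσ : σ ∈ T.facets) (hvσ : v ∈ convexHull ℝ (σ : Set (Fin N → ℝ))) :
    v ∈ σ := by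
  obtain ⟨τ, hτ, hvτ⟩ := mem_biUnion.1 hv
  have hmem : v ∈ convexHull ℝ ((τ ∩ σ : Finset (Fin N → ℝ)) : Set (Fin N → ℝ)) :=
    T.faceToFace τ hτ σ hσ ▸ ⟨subset_convexHull ℝ _ hvτ, hvσ⟩
  have himage : (fun y : τ => (y : Fin N → ℝ)) '' {y | (y : Fin N → ℝ) ∈ σ} = ↑(τ ∩ σ) := by
    ext y; simp [and_comm]
  exact ((T.indep τ hτ).mem_affineSpan_iff ⟨v, hvτ⟩ {y | (y : Fin N → ℝ) ∈ σ}).1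
    (himage ▸ convexHull_subset_affineSpan _ hmem)

lemma vtx_mem_of_mem_convexHull {σ : Finset (Fin N → ℝ)} (hσ : σ ∈ T.facets) {i : Fin N}
    (h : vtx N i ∈ convexHull ℝ (σ : Set (Fin N → ℝ))) : vtx N i ∈ σ := by
  let l : (Fin N → ℝ) →ₗ[ℝ] ℝ := ∑ j ∈ univ.erase i, LinearMap.proj j
  have hl : ∀ y, l y = ∑ j ∈ univ.erase i, y j := by simp [l]
  have hlσ : ∀ y ∈ σ, 0 ≤ l y := fun y hy =>
    (hl y).symm ▸ sum_nonneg fun j _ => (mem_stdSimplex_of_mem_facet hσ hy).1 j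
  have hface := mem_convexHull_filter_of_map_eq_zero l hlσ h
    (by rw [hl]; exact sum_eq_zero fun j hj => by simp [vtx, ne_of_mem_erase hj])
  obtain ⟨y, hy⟩ := convexHull_nonempty_iff.1 ⟨_, hface⟩
  obtain ⟨hyσ, hly⟩ := mem_filter.1 hy
  rw [hl, sum_eq_zero_iff_of_nonneg fun j _ => (mem_stdSimplex_of_mem_facet hσ hyσ).1 j] at hly
  rwa [← eq_vtx_of_mem_stdSimplex (mem_stdSimplex_of_mem_facet hσ hyσ) fun j hj =>
    hly j (mem_erase.2 ⟨hj, mem_univ j⟩)]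

variable (T)

lemma vtx_mem_vertices (i : Fin N) : vtx N i ∈ T.vertices := by
  have h := vtx_mem_stdSimplex (N := N) i
  rw [← T.covers, Set.mem_iUnion₂] at h
  obtain ⟨σ, hσ, hiσ⟩ := h
  exact mem_biUnion.2 ⟨σ, hσ, vtx_mem_of_mem_convexHull hσ hiσ⟩

lemma eventually_exists_facet (x d : Fin N → ℝ) :
    ∀ᶠ t in 𝓝 (0 : ℝ), x + t • d ∈ stdSimplex ℝ (Fin N) → ∃ σ ∈ T.facets,
      x ∈ convexHull ℝ (σ : Set (Fin N → ℝ)) ∧ x + t • d ∈ convexHull ℝ (σ : Set (Fin N → ℝ)) := by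
  set far := T.facets.filter fun σ : Finset (Fin N → ℝ) => x ∉ convexHull ℝ (σ : Set (Fin N → ℝ))
  set F := ⋃ σ ∈ far, convexHull ℝ (σ : Set (Fin N → ℝ))
  have hclosed : IsClosed F := isClosed_biUnion_finset fun (σ : Finset (Fin N → ℝ)) _ =>
    (σ.finite_toSet.isCompact_convexHull (𝕜 := ℝ)).isClosed
  have hx : x ∉ F := by
    simp only [F, Set.mem_iUnion, far, mem_filter]
    tauto
  have hpath : Tendsto (fun t : ℝ => x + t • d) (𝓝 0) (𝓝 x) := by
    exact (continuous_const.add (continuous_id.smul continuous_const)).tendsto' 0 _ (by simp)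
  filter_upwards [hpath.eventually (hclosed.isOpen_compl.mem_nhds hx)] with t hfar ht
  rw [← T.covers, Set.mem_iUnion₂] at ht
  obtain ⟨σ, hσ, htσ⟩ := ht
  exact ⟨σ, hσ, by_contra fun hxσ => hfar (Set.mem_iUnion₂.2 ⟨σ, mem_filter.2 ⟨hσ, hxσ⟩, htσ⟩),
    htσ⟩

lemma sum_card_filter_powersetCard_two (P : Finset (Fin N → ℝ) → Prop) [DecidablePred P] :
    ∑ σ ∈ T.facets, #{e ∈ σ.powersetCard 2 | P e} = ∑ e ∈ T.edges with P e, T.edgeDegree e := by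
  unfold edgeDegree
  have := sum_card_bipartiteAbove_eq_sum_card_bipartiteBelow (s := T.facets)
    (t := {e ∈ T.edges | P e}) (r := fun σ e => e ⊆ σ)
  simp only [bipartiteAbove, bipartiteBelow] at this
  rw [← this]
  refine sum_congr rfl fun σ hσ => congrArg card ?_
  ext e
  simp only [mem_filter, mem_powersetCard, mem_edges]
  exact ⟨fun ⟨⟨hes, he⟩, hP⟩ => ⟨⟨⟨σ, hσ, hes, he⟩, hP⟩, hes⟩,
    fun ⟨⟨⟨_, _, _, he⟩, hP⟩, hes⟩ => ⟨⟨hes, he⟩, hP⟩⟩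

end General

variable {T : Triangulation 3}

lemma sum_eq_one_of_mem_facet {σ : Finset (Fin 3 → ℝ)} (hσ : σ ∈ T.facets) {v : Fin 3 → ℝ}
    (hv : v ∈ σ) : ∑ i, v i = 1 :=
  (mem_stdSimplex_of_mem_facet hσ hv).2

lemma mem_vertices_of_mem_edges {e : Finset (Fin 3 → ℝ)} (he : e ∈ T.edges) {v : Fin 3 → ℝ}
    (hv : v ∈ e) : v ∈ T.vertices := by
  obtain ⟨σ, hσ, heσ, -⟩ := mem_edges.1 he
  exact mem_biUnion.2 ⟨σ, hσ, heσ hv⟩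

lemma card_eq_two_of_mem_edges {e : Finset (Fin 3 → ℝ)} (he : e ∈ T.edges) : #e = 2 := by
  obtain ⟨-, -, -, h⟩ := mem_edges.1 he
  exact h

lemma orient_ne_zero {σ : Finset (Fin 3 → ℝ)} (hσ : σ ∈ T.facets) {a b c : Fin 3 → ℝ}
    (ha : a ∈ σ) (hb : b ∈ σ) (hc : c ∈ σ) (hab : a ≠ b) (hac : a ≠ c) (hbc : b ≠ c) :
    orient a b c ≠ 0 := by
  have hinj : Function.Injective ![(⟨a, ha⟩ : σ), ⟨b, hb⟩, ⟨c, hc⟩] := by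
    intro i j h; fin_cases i <;> fin_cases j <;> simp_all [eq_comm]
  have hind : AffineIndependent ℝ ![a, b, c] := by
    convert (T.indep σ hσ).comp_embedding ⟨_, hinj⟩ using 1
    ext i : 1; fin_cases i <;> rfl
  refine Matrix.det_ne_zero_of_affineIndependent hind fun i => ?_
  fin_cases i
  exacts [sum_eq_one_of_mem_facet hσ ha, sum_eq_one_of_mem_facet hσ hb,
    sum_eq_one_of_mem_facet hσ hc]

lemma orient_mul_orient_neg {σ σ' : Finset (Fin 3 → ℝ)} (hσ : σ ∈ T.facets)
    (hσ' : σ' ∈ T.facets) (hne : σ ≠ σ') {a b c c' : Fin 3 → ℝ} (hσeq : σ = {a, b, c})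
    (hσ'eq : σ' = {a, b, c'}) (hab : a ≠ b) (hac : a ≠ c) (hbc : b ≠ c) (hac' : a ≠ c')
    (hbc' : b ≠ c') : orient a b c * orient a b c' < 0 := by
  have ha : a ∈ σ := by simp [hσeq]
  have hb : b ∈ σ := by simp [hσeq]
  have hc : c ∈ σ := by simp [hσeq]
  have hc' : c' ∈ σ' := by simp [hσ'eq]
  have hd := orient_ne_zero hσ ha hb hc hab hac hbc
  have hd' := orient_ne_zero hσ' (by simp [hσ'eq]) (by simp [hσ'eq]) hc' hab hac' hbc'
  by_contra! hpos
  have hγ : 0 < orient a b c' / orient a b c := by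
    have : 0 < orient a b c * orient a b c' := lt_of_le_of_ne hpos (mul_ne_zero hd hd').symm
    rw [show orient a b c' / orient a b c = orient a b c * orient a b c' / orient a b c ^ 2 by
      field_simp]
    positivity
  have hsum : orient b c c' / orient a b c + orient c a c' / orient a b c +
      orient a b c' / orient a b c = 1 := by
    rw [← add_div, ← add_div, orient_add_orient_add_orient (sum_eq_one_of_mem_facet hσ ha)
      (sum_eq_one_of_mem_facet hσ hb) (sum_eq_one_of_mem_facet hσ hc)
      (sum_eq_one_of_mem_facet hσ' hc'), div_self hd]
  obtain ⟨p, q, μ, hμ, hx⟩ :=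
    exists_mem_convexHull_inter_of_same_side (eq_orient_div_smul_add hd c') hsum hγ
  have hinter : σ ∩ σ' = {a, b} := by
    have hcc' : c ≠ c' := fun h => hne (by rw [hσeq, hσ'eq, h])
    ext y
    simp only [hσeq, hσ'eq, mem_inter, mem_insert, mem_singleton]
    grind
  have hx0 := (orient a b).map_eq_zero_of_mem_convexHull (s := {a, b}) (by simp) <| by
    rw [← coe_pair, ← hinter, ← T.faceToFace σ hσ σ' hσ', hσeq, hσ'eq]
    simpa using hx
  simp [hd', hμ.ne'] at hx0

lemma eq_of_mem_of_apply_eq_zero {σ σ' : Finset (Fin 3 → ℝ)} (hσ : σ ∈ T.facets)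
    (hσ' : σ' ∈ T.facets) {a b : Fin 3 → ℝ} (hab : a ≠ b) (ha : a ∈ σ) (hb : b ∈ σ)
    (ha' : a ∈ σ') (hb' : b ∈ σ') {i : Fin 3} (hai : a i = 0) (hbi : b i = 0) : σ = σ' := by
  by_contra hne
  obtain ⟨c, hσeq, hac, hbc⟩ := exists_eq_insert_insert_of_card_eq_three (T.card_eq σ hσ) ha hb hab
  obtain ⟨c', hσ'eq, hac', hbc'⟩ :=
    exists_eq_insert_insert_of_card_eq_three (T.card_eq σ' hσ') ha' hb' hab
  have hc : c ∈ σ := by simp [hσeq]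
  have hc' : c' ∈ σ' := by simp [hσ'eq]
  have hci : 0 < c i := lt_of_le_of_ne ((mem_stdSimplex_of_mem_facet hσ hc).1 i) fun h =>
    orient_ne_zero hσ ha hb hc hab hac hbc (orient_eq_zero_of_apply_eq_zero i hai hbi h.symm)
  have hc'i : 0 < c' i := lt_of_le_of_ne ((mem_stdSimplex_of_mem_facet hσ' hc').1 i) fun h =>
    orient_ne_zero hσ' ha' hb' hc' hab hac' hbc' (orient_eq_zero_of_apply_eq_zero i hai hbi h.symm)
  have hneg := orient_mul_orient_neg hσ hσ' hne hσeq hσ'eq hab hac hbc hac' hbc'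
  -- the `i`-th coordinate of Cramer's rule for `c'` in the basis `a, b, c`
  have hcramer := congrFun (orient_smul_eq a b c c') i
  simp only [Pi.smul_apply, Pi.add_apply, smul_eq_mul, hai, hbi, mul_zero, zero_add] at hcramer
  have hsq : orient a b c ^ 2 * c' i = orient a b c * orient a b c' * c i := by
    rw [sq, mul_assoc, hcramer, mul_assoc]
  nlinarith [mul_neg_of_neg_of_pos hneg hci, mul_nonneg (sq_nonneg (orient a b c)) hc'i.le]

lemma edgeDegree_le_two {e : Finset (Fin 3 → ℝ)} (he : e ∈ T.edges) : T.edgeDegree e ≤ 2 := by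
  obtain ⟨a, b, hab, rfl⟩ := card_eq_two.1 (card_eq_two_of_mem_edges he)
  by_contra! h
  obtain ⟨σ₀, h₀, σ₁, h₁, σ₂, h₂, h01, h02, h12⟩ := two_lt_card.1 h
  have third : ∀ σ ∈ {σ ∈ T.facets | {a, b} ⊆ σ}, ∃ c, σ = {a, b, c} ∧ a ≠ c ∧ b ≠ c :=
    fun σ hσ => exists_eq_insert_insert_of_card_eq_three (T.card_eq σ (mem_filter.1 hσ).1)
      ((mem_filter.1 hσ).2 (by simp)) ((mem_filter.1 hσ).2 (by simp)) hab
  obtain ⟨c₀, e₀, ha₀, hb₀⟩ := third σ₀ h₀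
  obtain ⟨c₁, e₁, ha₁, hb₁⟩ := third σ₁ h₁
  obtain ⟨c₂, e₂, ha₂, hb₂⟩ := third σ₂ h₂
  have n01 := orient_mul_orient_neg (mem_filter.1 h₀).1 (mem_filter.1 h₁).1 h01 e₀ e₁ hab
    ha₀ hb₀ ha₁ hb₁
  have n02 := orient_mul_orient_neg (mem_filter.1 h₀).1 (mem_filter.1 h₂).1 h02 e₀ e₂ hab
    ha₀ hb₀ ha₂ hb₂
  have n12 := orient_mul_orient_neg (mem_filter.1 h₁).1 (mem_filter.1 h₂).1 h12 e₁ e₂ hab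
    ha₁ hb₁ ha₂ hb₂
  nlinarith [mul_pos_of_neg_of_neg n01 n02, sq_nonneg (orient a b c₀)]

lemma mem_of_midpoint_mem_convexHull {σ σ' : Finset (Fin 3 → ℝ)} (hσ : σ ∈ T.facets)
    (hσ' : σ' ∈ T.facets) {a b c : Fin 3 → ℝ} (hσeq : σ = {a, b, c}) (hab : a ≠ b) (hac : a ≠ c)
    (hbc : b ≠ c) (hm : (1 / 2 : ℝ) • a + (1 / 2 : ℝ) • b ∈ convexHull ℝ (σ' : Set (Fin 3 → ℝ))) :
    a ∈ σ' ∧ b ∈ σ' := by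
  have hd := orient_ne_zero hσ (by simp [hσeq]) (by simp [hσeq]) (by simp [hσeq]) hab hac hbc
  have hσm : (1 / 2 : ℝ) • a + (1 / 2 : ℝ) • b ∈ convexHull ℝ (σ : Set (Fin 3 → ℝ)) :=
    segment_subset_convexHull (by simp [hσeq]) (by simp [hσeq])
      ⟨1 / 2, 1 / 2, by norm_num, by norm_num, by norm_num, rfl⟩
  have hK := T.faceToFace σ hσ σ' hσ' ▸ Set.mem_inter hσm hm
  have hsub : σ ∩ σ' ⊆ {a, b, c} := by rw [← hσeq]; exact inter_subset_left
  refine ⟨mem_of_mem_inter_right (mem_of_orient_ne_zero hsub hK ?_),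
    mem_of_mem_inter_right (mem_of_orient_ne_zero (b := c) (c := a)
      (hsub.trans (by simp [insert_subset_iff])) hK ?_)⟩
  · rw [show orient b c ((1 / 2 : ℝ) • a + (1 / 2 : ℝ) • b) = orient a b c / 2 by
      simp only [orient_apply, Pi.add_apply, Pi.smul_apply, smul_eq_mul]; ring]
    exact div_ne_zero hd two_ne_zero
  · rw [show orient c a ((1 / 2 : ℝ) • a + (1 / 2 : ℝ) • b) = orient a b c / 2 by
      simp only [orient_apply, Pi.add_apply, Pi.smul_apply, smul_eq_mul]; ring]
    exact div_ne_zero hd two_ne_zero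

lemma exists_facet_ne_of_forall_ne_zero {σ : Finset (Fin 3 → ℝ)} (hσ : σ ∈ T.facets)
    {a b : Fin 3 → ℝ} (hab : a ≠ b) (ha : a ∈ σ) (hb : b ∈ σ) (hint : ∀ i, a i ≠ 0 ∨ b i ≠ 0) :
    ∃ σ' ∈ T.facets, σ' ≠ σ ∧ a ∈ σ' ∧ b ∈ σ' := by
  obtain ⟨c, hσeq, hac, hbc⟩ := exists_eq_insert_insert_of_card_eq_three (T.card_eq σ hσ) ha hb hab
  have hc : c ∈ σ := by simp [hσeq]
  have hd := orient_ne_zero hσ ha hb hc hab hac hbc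
  have haΔ := mem_stdSimplex_of_mem_facet hσ ha
  have hbΔ := mem_stdSimplex_of_mem_facet hσ hb
  set m : Fin 3 → ℝ := (1 / 2 : ℝ) • a + (1 / 2 : ℝ) • b
  have hm : ∀ i, 0 < m i := fun i => by
    have := haΔ.1 i; have := hbΔ.1 i
    have : 0 < a i + b i := by rcases hint i with h | h <;> positivity
    simp only [m, Pi.add_apply, Pi.smul_apply, smul_eq_mul]
    linarith
  have hm1 : ∑ i, m i = 1 := by
    simp only [m, Pi.add_apply, Pi.smul_apply, smul_eq_mul, sum_add_distrib, ← mul_sum, haΔ.2,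
      hbΔ.2]
    norm_num
  have hmc : ∑ i, (m - c) i = 0 := by
    simp [sum_sub_distrib, hm1, sum_eq_one_of_mem_facet hσ hc]
  -- push `m` slightly off the edge, to the side opposite to `c`
  obtain ⟨t, ⟨hfacet, hΔ⟩, ht⟩ := (((T.eventually_exists_facet m (m - c)).and
    (eventually_add_smul_mem_stdSimplex hm hm1 hmc)).filter_mono nhdsWithin_le_nhds).and
    (self_mem_nhdsWithin (s := Set.Ioi 0)) |>.exists
  obtain ⟨σ', hσ', hmσ', htσ'⟩ := hfacet hΔ
  refine ⟨σ', hσ', fun hσσ' => ?_, mem_of_midpoint_mem_convexHull hσ hσ' hσeq hab hac hbc hmσ'⟩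
  have hside := orient_mul_orient_nonneg_of_mem_convexHull (by simpa [hσσ', hσeq] using htσ')
  have : orient a b (m + t • (m - c)) = -(t * orient a b c) := by simp [m]
  rw [this] at hside
  nlinarith [mul_pos (Set.mem_Ioi.1 ht) (mul_self_pos.2 hd)]

variable (T)

lemma edgeDegree_mod_two {e : Finset (Fin 3 → ℝ)} (he : e ∈ T.edges) :
    T.edgeDegree e % 2 = if ∃ i, ∀ y ∈ e, y i = 0 then 1 else 0 := by
  obtain ⟨σ, hσ, heσ, he2⟩ := mem_edges.1 he
  obtain ⟨a, b, hab, rfl⟩ := card_eq_two.1 he2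
  have ha : a ∈ σ := heσ (by simp)
  have hb : b ∈ σ := heσ (by simp)
  have hσmem : σ ∈ {σ ∈ T.facets | {a, b} ⊆ σ} := mem_filter.2 ⟨hσ, heσ⟩
  split_ifs with hbd
  · obtain ⟨i, hi⟩ := hbd
    suffices T.edgeDegree {a, b} = 1 by rw [this]
    refine le_antisymm (card_le_one.2 fun σ₁ h₁ σ₂ h₂ => ?_) (card_pos.2 ⟨σ, hσmem⟩)
    obtain ⟨h₁, hab₁⟩ := mem_filter.1 h₁
    obtain ⟨h₂, hab₂⟩ := mem_filter.1 h₂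
    exact eq_of_mem_of_apply_eq_zero h₁ h₂ hab (hab₁ (by simp)) (hab₁ (by simp)) (hab₂ (by simp))
      (hab₂ (by simp)) (hi a (by simp)) (hi b (by simp))
  · have hint : ∀ i, a i ≠ 0 ∨ b i ≠ 0 := fun i => by
      by_contra! h
      exact hbd ⟨i, by simpa using h⟩
    obtain ⟨σ', hσ', hne, ha', hb'⟩ := exists_facet_ne_of_forall_ne_zero hσ hab ha hb hint
    suffices T.edgeDegree {a, b} = 2 by rw [this]
    refine le_antisymm (edgeDegree_le_two he) (one_lt_card.2 ⟨σ, hσmem, σ', ?_, hne.symm⟩)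
    exact mem_filter.2 ⟨hσ', by simp [insert_subset_iff, ha', hb']⟩

lemma sum_card_filter_powersetCard_two_mod_two (P : Finset (Fin 3 → ℝ) → Prop)
    [DecidablePred P] :
    (∑ σ ∈ T.facets, #{e ∈ σ.powersetCard 2 | P e}) % 2 =
      #{e ∈ T.edges | P e ∧ ∃ i, ∀ y ∈ e, y i = 0} % 2 := by
  rw [sum_card_filter_powersetCard_two, sum_nat_mod,
    sum_congr rfl fun e he => T.edgeDegree_mod_two (mem_filter.1 he).1, sum_boole, filter_filter]
  simp

lemma card_rainbow_mod_two (ℓ : (Fin 3 → ℝ) → Fin 3) :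
    #{σ ∈ T.facets | σ.image ℓ = univ} % 2 =
      #{e ∈ T.edges | e.image ℓ = {0, 1} ∧ ∃ i, ∀ y ∈ e, y i = 0} % 2 := by
  rw [← sum_card_filter_powersetCard_two_mod_two, sum_nat_mod,
    sum_congr rfl fun σ hσ => card_filter_powersetCard_two_image_mod_two (T.card_eq σ hσ) ℓ,
    sum_boole]
  simp

lemma card_boundary_edges_mem_mod_two (v : Fin 3 → ℝ) :
    #{e ∈ T.edges | v ∈ e ∧ ∃ i, ∀ y ∈ e, y i = 0} % 2 = 0 := by
  rw [← sum_card_filter_powersetCard_two_mod_two, sum_nat_mod, sum_eq_zero, Nat.zero_mod]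
  intro σ hσ
  by_cases hv : v ∈ σ
  · have := card_filter_powersetCard_subset {v} σ 2 (singleton_subset_iff.2 hv) (by simp)
    simp only [singleton_subset_iff, T.card_eq σ hσ, card_singleton] at this
    rw [this]
    rfl
  · rw [filter_false_of_mem fun e he hve => hv ((mem_powersetCard.1 he).1 hve)]
    rfl

variable {T}

lemma exists_forall_apply_eq_zero_iff {ℓ : (Fin 3 → ℝ) → Fin 3} (hℓ : IsSperner T ℓ)
    {e : Finset (Fin 3 → ℝ)} (he : e ∈ T.edges) (hdoor : e.image ℓ = {0, 1}) :
    (∃ i, ∀ y ∈ e, y i = 0) ↔ ∀ y ∈ e, y 2 = 0 := by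
  refine ⟨fun ⟨i, hi⟩ => ?_, fun h => ⟨2, h⟩⟩
  have hlabel : ∀ j ∈ e.image ℓ, i ≠ j := by
    intro j hj hij
    obtain ⟨y, hy, rfl⟩ := mem_image.1 hj
    exact hℓ y (mem_vertices_of_mem_edges he hy) (hij ▸ hi y hy)
  rw [hdoor] at hlabel
  obtain rfl : i = 2 := by
    have := hlabel 0 (by simp); have := hlabel 1 (by simp)
    omega
  exact hi

lemma exists_mem_facet_vtx_zero :
    ∃ σ ∈ T.facets, vtx 3 0 ∈ σ ∧ ∃ p ∈ σ, p ≠ vtx 3 0 ∧ p 2 = 0 := by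
  have hpath : ∀ t ∈ Set.Ioo (0 : ℝ) 1, vtx 3 0 + t • (vtx 3 1 - vtx 3 0) ∈ stdSimplex ℝ (Fin 3) :=
    fun t ht => by
      rw [show vtx 3 0 + t • (vtx 3 1 - vtx 3 0) = (1 - t) • vtx 3 0 + t • vtx 3 1 by module]
      exact convex_stdSimplex ℝ _ (vtx_mem_stdSimplex 0) (vtx_mem_stdSimplex 1)
        (by linarith [ht.2]) ht.1.le (by ring)
  obtain ⟨t, hfacet, ht⟩ := ((T.eventually_exists_facet (vtx 3 0) (vtx 3 1 - vtx 3 0)).filter_mono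
    nhdsWithin_le_nhds |>.and (Ioo_mem_nhdsGT zero_lt_one)).exists
  obtain ⟨σ, hσ, h0σ, htσ⟩ := hfacet (hpath t ht)
  have hface := mem_convexHull_filter_of_map_eq_zero (LinearMap.proj 2)
    (fun y hy => (mem_stdSimplex_of_mem_facet hσ hy).1 2) htσ (by simp [vtx])
  refine ⟨σ, hσ, vtx_mem_of_mem_convexHull hσ h0σ, ?_⟩
  by_contra! h
  have hsub : σ.filter (LinearMap.proj (R := ℝ) (φ := fun _ : Fin 3 => ℝ) 2 · = 0) ⊆ {vtx 3 0} :=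
    fun y hy => mem_singleton.2 (by_contra fun hy0 => h y (mem_filter.1 hy).1 hy0
      (mem_filter.1 hy).2)
  have := convexHull_mono (𝕜 := ℝ) (coe_subset.2 hsub) hface
  simp only [coe_singleton, convexHull_singleton, Set.mem_singleton_iff, add_eq_left,
    smul_eq_zero, ht.1.ne', false_or, sub_eq_zero] at this
  simpa [vtx] using congrFun this 1

lemma eq_of_mem_facet_vtx_zero {σ σ' : Finset (Fin 3 → ℝ)} (hσ : σ ∈ T.facets)
    (hσ' : σ' ∈ T.facets) (h0 : vtx 3 0 ∈ σ) (h0' : vtx 3 0 ∈ σ') {p q : Fin 3 → ℝ} (hp : p ∈ σ)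
    (hq : q ∈ σ') (hp0 : p ≠ vtx 3 0) (hq0 : q ≠ vtx 3 0) (hp2 : p 2 = 0) (hq2 : q 2 = 0) :
    p = q := by
  wlog hpq : p 1 ≤ q 1 generalizing σ σ' p q
  · exact (this hσ' hσ h0' h0 hq hp hq0 hp0 hq2 hp2 (le_of_not_ge hpq)).symm
  have hpΔ := mem_stdSimplex_of_mem_facet hσ hp
  have hqΔ := mem_stdSimplex_of_mem_facet hσ' hq
  have hq1 : 0 < q 1 := lt_of_le_of_ne (hqΔ.1 1) fun h => hq0 <|
    eq_vtx_of_mem_stdSimplex hqΔ fun j hj => by fin_cases j <;> simp_all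
  -- `p` lies between `vtx 3 0` and `q`, so it is a vertex of `σ'`, which would then be flat
  have hseg : (1 - p 1 / q 1) • vtx 3 0 + (p 1 / q 1) • q = p := by
    have hp1 := hpΔ.2; have hq1' := hqΔ.2
    simp only [Fin.sum_univ_three] at hp1 hq1'
    ext j; fin_cases j <;> simp [vtx, hp2, hq2] <;> field_simp
    linear_combination p 1 * hq1' - q 1 * hp1 + q 1 * hp2 - p 1 * hq2
  have hpσ' : p ∈ σ' := mem_facet_of_mem_convexHull (mem_biUnion.2 ⟨σ, hσ, hp⟩) hσ' <|
    segment_subset_convexHull h0' hq ⟨_, _, by rw [sub_nonneg, div_le_one hq1]; exact hpq,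
      div_nonneg (hpΔ.1 1) hq1.le, by ring, hseg⟩
  by_contra hpq
  exact orient_ne_zero hσ' h0' hpσ' hq (Ne.symm hp0) (Ne.symm hq0) hpq
    (orient_eq_zero_of_apply_eq_zero 2 (by simp [vtx]) hp2 hq2)

lemma card_bottom_edges_mem_vtx_zero :
    #{e ∈ T.edges | (∀ y ∈ e, y 2 = 0) ∧ vtx 3 0 ∈ e} = 1 := by
  obtain ⟨σ, hσ, h0, p, hp, hp0, hp2⟩ := exists_mem_facet_vtx_zero (T := T)
  refine card_eq_one.2 ⟨{vtx 3 0, p}, ext fun e => ?_⟩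
  simp only [mem_filter, mem_singleton]
  constructor
  · rintro ⟨he, hbot, h0e⟩
    obtain ⟨σ', hσ', heσ', he2⟩ := mem_edges.1 he
    obtain ⟨q, hq⟩ := card_eq_one.1 (by rw [card_erase_of_mem h0e, he2] : #(e.erase (vtx 3 0)) = 1)
    have hqe : q ∈ e.erase (vtx 3 0) := hq ▸ mem_singleton_self q
    rw [← insert_erase h0e, hq, eq_of_mem_facet_vtx_zero hσ hσ' h0 (heσ' h0e) hp
      (heσ' (mem_of_mem_erase hqe)) hp0 (ne_of_mem_erase hqe) hp2 (hbot q (mem_of_mem_erase hqe))]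
  · rintro rfl
    exact ⟨mem_edges.2 ⟨σ, hσ, by simp [insert_subset_iff, h0, hp], card_pair hp0.symm⟩,
      by simp [vtx, hp2], by simp⟩

lemma card_bottom_edges_mem_mod_two {v : Fin 3 → ℝ} (hv0 : v 0 ≠ 0) (hv1 : v 1 ≠ 0) :
    #{e ∈ T.edges | (∀ y ∈ e, y 2 = 0) ∧ v ∈ e} % 2 = 0 := by
  rw [← T.card_boundary_edges_mem_mod_two v]
  refine congrArg (· % 2) (congrArg card (filter_congr fun e _ =>
    ⟨fun ⟨hbot, hve⟩ => ⟨hve, 2, hbot⟩, fun ⟨hve, i, hi⟩ => ?_⟩))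
  fin_cases i
  exacts [absurd (hi v hve) hv0, absurd (hi v hve) hv1, ⟨hi, hve⟩]

lemma card_bottom_doors_mod_two {ℓ : (Fin 3 → ℝ) → Fin 3} (hℓ : IsSperner T ℓ) :
    #{e ∈ T.edges | e.image ℓ = {0, 1} ∧ ∀ y ∈ e, y 2 = 0} % 2 = 1 := by
  set B := {e ∈ T.edges | ∀ y ∈ e, y 2 = 0}
  set V₀ := {v ∈ T.vertices | v 2 = 0 ∧ ℓ v = 0}
  have hB : ∀ e ∈ B, e ∈ T.edges ∧ ∀ y ∈ e, y 2 = 0 := fun e he => mem_filter.1 he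
  have hdoor : #{e ∈ T.edges | e.image ℓ = {0, 1} ∧ ∀ y ∈ e, y 2 = 0} % 2 =
      (∑ e ∈ B, #{v ∈ e | ℓ v = 0}) % 2 := by
    rw [sum_nat_mod, sum_congr rfl fun e he => card_filter_eq_zero_mod_two_of_card_eq_two
      (card_eq_two_of_mem_edges (hB e he).1) ℓ fun y hy h =>
        hℓ y (mem_vertices_of_mem_edges (hB e he).1 hy) (h ▸ (hB e he).2 y hy),
      sum_boole, filter_filter]
    simp [and_comm]
  have hswap : ∑ e ∈ B, #{v ∈ e | ℓ v = 0} = ∑ v ∈ V₀, #{e ∈ B | v ∈ e} := by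
    have := sum_card_bipartiteAbove_eq_sum_card_bipartiteBelow (s := B) (t := V₀)
      (r := fun e v => v ∈ e)
    simp only [bipartiteAbove, bipartiteBelow] at this
    rw [← this]
    refine sum_congr rfl fun e he => congrArg card (ext fun v => ?_)
    obtain ⟨he, hbot⟩ := hB e he
    simp only [V₀, mem_filter]
    exact ⟨fun ⟨hv, hv0⟩ => ⟨⟨mem_vertices_of_mem_edges he hv, hbot v hv, hv0⟩, hv⟩,
      fun ⟨⟨_, _, hv0⟩, hv⟩ => ⟨hv, hv0⟩⟩
  have h0 : vtx 3 0 ∈ V₀ := by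
    have hV := T.vtx_mem_vertices 0
    refine mem_filter.2 ⟨hV, by simp [vtx], ?_⟩
    by_contra h
    exact hℓ _ hV (by simp [vtx, h])
  have hrest : ∀ v ∈ V₀.erase (vtx 3 0), #{e ∈ B | v ∈ e} % 2 = 0 := by
    intro v hv
    obtain ⟨hv0, hv⟩ := mem_erase.1 hv
    obtain ⟨hvV, hv2, hℓv⟩ := mem_filter.1 hv
    obtain ⟨σ, hσ, hvσ⟩ := mem_biUnion.1 hvV
    have hv1 : v 1 ≠ 0 := fun h => hv0 <| eq_vtx_of_mem_stdSimplex
      (mem_stdSimplex_of_mem_facet hσ hvσ) fun j hj => by fin_cases j <;> simp_all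
    rw [filter_filter]
    exact card_bottom_edges_mem_mod_two (hℓv ▸ hℓ v hvV) hv1
  rw [hdoor, hswap, ← add_sum_erase V₀ _ h0, filter_filter, card_bottom_edges_mem_vtx_zero,
    Nat.add_mod, sum_nat_mod, sum_eq_zero hrest]
  rfl

end Triangulation

/-- Sperner's lemma for the triangle: any Sperner labeling of a triangulated
triangle contains a small triangle whose three vertices receive all three labels. -/
theorem sperner_triangle (T : Triangulation 3) (ℓ : (Fin 3 → ℝ) → Fin 3)
    (hℓ : IsSperner T ℓ) :
    ∃ σ ∈ T.facets, σ.image ℓ = (Finset.univ : Finset (Fin 3)) := by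
  have hodd : #{σ ∈ T.facets | σ.image ℓ = univ} % 2 = 1 := by
    rw [T.card_rainbow_mod_two ℓ, filter_congr fun e he =>
      and_congr_right (Triangulation.exists_forall_apply_eq_zero_iff hℓ he)]
    exact Triangulation.card_bottom_doors_mod_two hℓ
  obtain ⟨σ, hσ⟩ := card_pos.1 (by omega : 0 < #{σ ∈ T.facets | σ.image ℓ = univ})
  exact ⟨σ, (mem_filter.1 hσ).1, (mem_filter.1 hσ).2⟩
end

section
/- Let λ_1,...,λ_{n-1} be piecewise linear maps on a triangulation T of the (n-1)-simplex, each sending every vertex of T to a vertex of Δ_{n-1} according to a Sperner labeling. Let λ be their average, and suppose x is a point in a facet τ of T with λ(x) equal to the barycenter of Δ_{n-1}. Then for every k with 1 ≤ k ≤ n−1, every k-element subset of {λ_1,...,λ_{n-1}} exhibits at least k+1 distinct labels on the vertices of τ. -/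
open scoped Classical

/-- Let `ℓ j` (`j < n-1`) be Sperner labelings of a triangulation `T` of the
`(n-1)`-simplex, giving piecewise linear maps `λ_j` sending each vertex `v` to the vertex
`e_{ℓ j v}`, and let `λ` be their average.  If a point `x = ∑_{v ∈ τ} w v • v` of a facet `τ`
of `T` satisfies `λ(x) = barycenter`, then every nonempty set `Λ` of the labelings exhibits
at least `|Λ| + 1` distinct labels on the vertices of `τ`. -/
theorem average_at_barycenter_exhibits_labels (n : ℕ) (hn : 2 ≤ n) (T : Triangulation n)
    (ℓ : Fin (n - 1) → (Fin n → ℝ) → Fin n) (hs : ∀ j, IsSperner T (ℓ j))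
    (τ : Finset (Fin n → ℝ)) (hτ : τ ∈ T.facets)
    (w : (Fin n → ℝ) → ℝ) (hw0 : ∀ v ∈ τ, 0 ≤ w v) (hw1 : ∑ v ∈ τ, w v = 1)
    (x : Fin n → ℝ) (hx : x = ∑ v ∈ τ, w v • v)
    (hbary : ∀ i : Fin n,
      (∑ j : Fin (n - 1), ∑ v ∈ τ, w v * (if ℓ j v = i then (1 : ℝ) else 0)) / (n - 1)
        = 1 / n) :
    ∀ Λ : Finset (Fin (n - 1)), Λ.Nonempty →
      Λ.card + 1 ≤
        (Finset.univ.filter (fun i : Fin n => ∃ j ∈ Λ, ∃ v ∈ τ, ℓ j v = i)).card := by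
  intro Λ hΛ
  set L := Finset.univ.filter (fun i : Fin n => ∃ j ∈ Λ, ∃ v ∈ τ, ℓ j v = i) with hLdef
  have hn1 : (0:ℝ) < (n:ℝ) - 1 := by
    have : (2:ℝ) ≤ (n:ℝ) := by exact_mod_cast hn
    linarith
  have hnpos : (0:ℝ) < (n:ℝ) := by linarith
  -- each label mass equals (n-1)/n
  have hS : ∀ i : Fin n,
      (∑ j : Fin (n-1), ∑ v ∈ τ, w v * (if ℓ j v = i then (1:ℝ) else 0))
        = ((n:ℝ)-1)/(n:ℝ) := by
    intro i
    have h := hbary i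
    rw [div_eq_div_iff hn1.ne' hnpos.ne'] at h
    rw [eq_div_iff hnpos.ne']
    linarith
  -- total over L
  have htot : ∑ i ∈ L, (∑ j : Fin (n-1), ∑ v ∈ τ, w v * (if ℓ j v = i then (1:ℝ) else 0))
      = (L.card : ℝ) * (((n:ℝ)-1)/(n:ℝ)) := by
    rw [Finset.sum_congr rfl (fun i _ => hS i), Finset.sum_const, nsmul_eq_mul]
  -- swap order and bound below by |Λ|
  have hswap : ∑ i ∈ L, (∑ j : Fin (n-1), ∑ v ∈ τ, w v * (if ℓ j v = i then (1:ℝ) else 0))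
      = ∑ j : Fin (n-1), ∑ v ∈ τ, w v * (if ℓ j v ∈ L then (1:ℝ) else 0) := by
    rw [Finset.sum_comm]
    refine Finset.sum_congr rfl fun j _ => ?_
    rw [Finset.sum_comm]
    refine Finset.sum_congr rfl fun v _ => ?_
    rw [← Finset.mul_sum, Finset.sum_ite_eq L (ℓ j v) (fun _ => (1:ℝ))]
  have hterm_nonneg : ∀ j : Fin (n-1),
      (0:ℝ) ≤ ∑ v ∈ τ, w v * (if ℓ j v ∈ L then (1:ℝ) else 0) := by
    intro j
    refine Finset.sum_nonneg fun v hv => ?_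
    have := hw0 v hv
    positivity
  have hterm_eq : ∀ j ∈ Λ, (∑ v ∈ τ, w v * (if ℓ j v ∈ L then (1:ℝ) else 0)) = 1 := by
    intro j hj
    calc (∑ v ∈ τ, w v * (if ℓ j v ∈ L then (1:ℝ) else 0)) = ∑ v ∈ τ, w v := by
          refine Finset.sum_congr rfl fun v hv => ?_
          have hmem : ℓ j v ∈ L := by
            rw [hLdef, Finset.mem_filter]
            exact ⟨Finset.mem_univ _, j, hj, v, hv, rfl⟩
          rw [if_pos hmem, mul_one]
      _ = 1 := hw1
  have hlower : (Λ.card : ℝ) ≤ ∑ j : Fin (n-1), ∑ v ∈ τ, w v * (if ℓ j v ∈ L then (1:ℝ) else 0) := by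
    calc (Λ.card : ℝ) = ∑ j ∈ Λ, (1:ℝ) := by simp
    _ = ∑ j ∈ Λ, ∑ v ∈ τ, w v * (if ℓ j v ∈ L then (1:ℝ) else 0) :=
        (Finset.sum_congr rfl fun j hj => (hterm_eq j hj).symm)
    _ ≤ ∑ j : Fin (n-1), ∑ v ∈ τ, w v * (if ℓ j v ∈ L then (1:ℝ) else 0) :=
        Finset.sum_le_sum_of_subset_of_nonneg (Finset.subset_univ Λ)
          (fun j _ _ => hterm_nonneg j)
  have key : (Λ.card : ℝ) ≤ (L.card : ℝ) * (((n:ℝ)-1)/(n:ℝ)) := by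
    rw [← htot, hswap]; exact hlower
  have hΛ1 : (1:ℝ) ≤ (Λ.card : ℝ) := by
    exact_mod_cast Nat.one_le_iff_ne_zero.mpr (Finset.card_ne_zero_of_mem hΛ.choose_spec)
  have hlt : (Λ.card : ℝ) < (L.card : ℝ) := by
    by_contra h
    push_neg at h
    have hkey' : (Λ.card : ℝ) * (n:ℝ) ≤ (L.card : ℝ) * ((n:ℝ) - 1) := by
      calc (Λ.card : ℝ) * (n:ℝ) ≤ ((L.card : ℝ) * (((n:ℝ)-1)/(n:ℝ))) * (n:ℝ) := by
            exact mul_le_mul_of_nonneg_right key (le_of_lt hnpos)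
        _ = (L.card : ℝ) * ((n:ℝ) - 1) := by field_simp
    nlinarith
  have : Λ.card < L.card := by exact_mod_cast hlt
  omega
end

section
/- Key counting lemma: let β be an (n+1)×m matrix of nonnegative reals with column sums Σ_i β_{ij} = α_j and row sums Σ_j β_{ij} = 1/(n+1), where α_j(n+1) > k_j − 1. Then for each j, the number of indices i with β_{ij} > 0 is at least k_j. -/
/-- Key counting lemma: let `β` be an `(n+1) × m` matrix of nonnegative reals
with column sums `∑ i, β i j = α j` and row sums `∑ j, β i j = 1/(n+1)`, where
`α j (n+1) > k j − 1`.  Then for each `j` there are at least `k j` indices `i` with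
`β i j > 0`. -/
theorem babson_counting (n m : ℕ) (hn : 0 < n) (hm : 0 < m)
    (β : Fin (n + 1) → Fin m → ℝ) (hβ : ∀ i j, 0 ≤ β i j)
    (α : Fin m → ℝ) (hα : ∀ j, 0 < α j) (k : Fin m → ℕ) (hk : ∀ j, 0 < k j)
    (hcol : ∀ j, ∑ i, β i j = α j) (hrow : ∀ i, ∑ j, β i j = 1 / (n + 1))
    (hαk : ∀ j, (k j : ℝ) - 1 < α j * (n + 1)) :
    ∀ j, k j ≤ (Finset.univ.filter (fun i => 0 < β i j)).card := by
  intro j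
  set S := Finset.univ.filter (fun i => 0 < β i j) with hS
  have hβle : ∀ i, β i j ≤ 1 / (n + 1) := by
    intro i
    rw [← hrow i]
    exact Finset.single_le_sum (fun j' _ => hβ i j') (Finset.mem_univ j)
  have hsum : ∑ i, β i j = ∑ i ∈ S, β i j := by
    refine (Finset.sum_subset (Finset.subset_univ S) ?_).symm
    intro i _ hiS
    have := hβ i j
    have h2 : ¬ 0 < β i j := by
      intro h
      exact hiS (Finset.mem_filter.mpr ⟨Finset.mem_univ i, h⟩)
    linarith
  have h1 : α j ≤ S.card * (1 / (n + 1)) := by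
    rw [← hcol j, hsum]
    calc ∑ i ∈ S, β i j ≤ ∑ _i ∈ S, (1 / (n + 1) : ℝ) :=
          Finset.sum_le_sum (fun i _ => hβle i)
      _ = S.card * (1 / (n + 1)) := by rw [Finset.sum_const]; ring
  have hpos : (0 : ℝ) < (n : ℝ) + 1 := by positivity
  have h2 : α j * (n + 1) ≤ S.card := by
    have := mul_le_mul_of_nonneg_right h1 hpos.le
    calc α j * (n + 1) ≤ S.card * (1 / (n + 1)) * (n + 1) := this
      _ = S.card := by field_simp
  have h3 : (k j : ℝ) < S.card + 1 := by linarith [hαk j]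
  have h4 : k j < S.card + 1 := by exact_mod_cast h3
  omega
end

section
/- Lower bound from partial averages: let λ_1,...,λ_{n-1} be piecewise linear extensions of vertex labelings on a triangulation of Δ_{n-1}, let Λ be a k-element subset of indices, and suppose every λ_j with j ∈ Λ labels every vertex of a facet τ only with labels from a k-element set J ⊆ {1,...,n}. Then for every point y ∈ τ, the sum over i ∈ J of the i-th coordinates of (1/(n-1))Σ_j λ_j(y) is at least k/(n-1). In particular no point of τ is mapped to the barycenter of Δ_{n-1}, since the barycenter's corresponding sum is k/n < k/(n-1). -/
open scoped Classical

/-- Lower bound from partial averages: let `ℓ j` (`j < n-1`) be vertex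
labelings of a triangulation of the `(n-1)`-simplex (extended piecewise linearly), let `Λ` be
a `k`-element set of indices, and suppose every `ℓ j` with `j ∈ Λ` labels every vertex of a
facet `τ` only with labels from a `k`-element set `J`.  Then for every point
`y = ∑_{v ∈ τ} w v • v` of `τ`, the sum over `i ∈ J` of the `i`-th coordinates of
`(1/(n-1)) ∑ j λ_j(y)` is at least `k/(n-1)`; in particular `y` is not mapped to the
barycenter of the simplex. -/
theorem partial_average_lower_bound (n : ℕ) (hn : 2 ≤ n) (T : Triangulation n)
    (ℓ : Fin (n - 1) → (Fin n → ℝ) → Fin n)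
    (τ : Finset (Fin n → ℝ)) (hτ : τ ∈ T.facets)
    (Λ : Finset (Fin (n - 1))) (J : Finset (Fin n)) (k : ℕ) (hk : 1 ≤ k)
    (hΛ : Λ.card = k) (hJ : J.card = k)
    (hlab : ∀ j ∈ Λ, ∀ v ∈ τ, ℓ j v ∈ J)
    (w : (Fin n → ℝ) → ℝ) (hw0 : ∀ v ∈ τ, 0 ≤ w v) (hw1 : ∑ v ∈ τ, w v = 1) :
    (k : ℝ) / (n - 1) ≤
      ∑ i ∈ J,
        (∑ j : Fin (n - 1), ∑ v ∈ τ, w v * (if ℓ j v = i then (1 : ℝ) else 0)) / (n - 1) ∧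
    ¬ (∀ i : Fin n,
        (∑ j : Fin (n - 1), ∑ v ∈ τ, w v * (if ℓ j v = i then (1 : ℝ) else 0)) / (n - 1)
          = 1 / n) := by
  have hn1 : (0:ℝ) < (n:ℝ) - 1 := by
    have : (2:ℝ) ≤ (n:ℝ) := by exact_mod_cast hn
    linarith
  -- inner sum over i ∈ J for fixed j
  have key : ∀ j : Fin (n-1),
      ∑ i ∈ J, ∑ v ∈ τ, w v * (if ℓ j v = i then (1:ℝ) else 0)
        = ∑ v ∈ τ, w v * (if ℓ j v ∈ J then (1:ℝ) else 0) := by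
    intro j
    rw [Finset.sum_comm]
    refine Finset.sum_congr rfl fun v hv => ?_
    rw [← Finset.mul_sum]
    congr 1
    by_cases h : ℓ j v ∈ J
    · simp [h, Finset.sum_ite_eq' J (ℓ j v) (fun _ => (1:ℝ))]
    · simp [h, Finset.sum_ite_eq' J (ℓ j v) (fun _ => (1:ℝ))]
  have keyΛ : ∀ j ∈ Λ,
      ∑ i ∈ J, ∑ v ∈ τ, w v * (if ℓ j v = i then (1:ℝ) else 0) = 1 := by
    intro j hj
    rw [key j]
    have e : ∑ v ∈ τ, (w v * if ℓ j v ∈ J then (1:ℝ) else 0) = ∑ v ∈ τ, w v :=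
      Finset.sum_congr rfl fun v hv => by rw [if_pos (hlab j hj v hv), mul_one]
    rw [e, hw1]
  have keypos : ∀ j : Fin (n-1),
      0 ≤ ∑ i ∈ J, ∑ v ∈ τ, w v * (if ℓ j v = i then (1:ℝ) else 0) := by
    intro j
    rw [key j]
    refine Finset.sum_nonneg fun v hv => mul_nonneg (hw0 v hv) (by positivity)
  have main : (k:ℝ) ≤ ∑ i ∈ J, ∑ j : Fin (n-1), ∑ v ∈ τ, w v * (if ℓ j v = i then (1:ℝ) else 0) := by
    rw [Finset.sum_comm]
    calc (k:ℝ) = ∑ j ∈ Λ, (1:ℝ) := by simp [hΛ]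
    _ = ∑ j ∈ Λ, ∑ i ∈ J, ∑ v ∈ τ, w v * (if ℓ j v = i then (1:ℝ) else 0) := by
        exact (Finset.sum_congr rfl fun j hj => (keyΛ j hj).symm)
    _ ≤ ∑ j : Fin (n-1), ∑ i ∈ J, ∑ v ∈ τ, w v * (if ℓ j v = i then (1:ℝ) else 0) := by
        exact Finset.sum_le_sum_of_subset_of_nonneg (Finset.subset_univ Λ)
          (fun j _ _ => keypos j)
  have first : (k : ℝ) / (n - 1) ≤
      ∑ i ∈ J, (∑ j : Fin (n - 1), ∑ v ∈ τ, w v * (if ℓ j v = i then (1 : ℝ) else 0)) / (n - 1) := by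
    rw [← Finset.sum_div]
    gcongr
  refine ⟨first, ?_⟩
  intro hall
  have hsum : ∑ i ∈ J, (∑ j : Fin (n - 1), ∑ v ∈ τ, w v * (if ℓ j v = i then (1 : ℝ) else 0)) / (n - 1) = (k:ℝ)/n := by
    rw [Finset.sum_congr rfl (fun i _ => hall i)]
    simp [hJ]
    ring
  rw [hsum] at first
  have hnpos : (0:ℝ) < (n:ℝ) := by positivity
  have hkpos : (0:ℝ) < (k:ℝ) := by exact_mod_cast hk
  have : (k:ℝ)/(n-1) > (k:ℝ)/n := by
    apply div_lt_div_of_pos_left hkpos hn1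
    linarith
  linarith
end
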